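/- arXiv:0805.2338 — 10 statements merged into one kernel-verified Lean document; each statement's English description precedes it below -/
import Mathlib

section
/- Let p = r₁(x)·s₂(y) − r₂(y)·s₁(x) where r₁, s₁ ∈ K[x₁,…,xₙ] and r₂, s₂ ∈ K[y₁,…,yₙ] are non-constant polynomials with gcd(r₁,s₁) = 1 and gcd(r₂,s₂) = 1, and neither r₁,s₁ nor r₂,s₂ are associated. Then p has no non-constant factor lying in K[x₁,…,xₙ] or in K[y₁,…,yₙ]. -/
/-!
Suppose `q(x)` is non-constant and divides `p`, and let `π` be an irreducible factor of `q`.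
Reducing the coefficients (which live in `K[x]`) modulo `π` kills `p`, so
`r̄₁ • s₂(y) = s̄₁ • r₂(y)` over the domain `K[x]/(π)`. As `r₁, s₁` are coprime, `r̄₁` and `s̄₁`
are not both zero, and comparing coefficients forces `r₂` and `s₂` to be proportional over `K`,
i.e. associated. Factors in `y` are handled the same way after swapping the two sets of variables.
-/

open MvPolynomial

namespace MvPolynomial

variable {σ τ K : Type*} [Field K]

theorem associated_of_coeff_mul_comm {u v : MvPolynomial σ K} (hu : u ≠ 0) (hv : v ≠ 0)
    (h : ∀ m m', coeff m u * coeff m' v = coeff m' u * coeff m v) : Associated u v := by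
  obtain ⟨m₀, hm₀⟩ := ne_zero_iff.mp hu
  set c := coeff m₀ v / coeff m₀ u
  have hv_eq : v = C c * u := by
    ext m
    rw [coeff_C_mul, div_mul_eq_mul_div, eq_div_iff hm₀]
    linear_combination h m₀ m
  have hc : c ≠ 0 := fun hc => hv (by rw [hv_eq, hc, C_0, zero_mul])
  rw [hv_eq]
  exact associated_unit_mul_right u _ ((isUnit_iff_ne_zero.mpr hc).map C)

theorem associated_of_C_mul_map_eq {D : Type*} [CommRing D] [IsDomain D] (f : K →+* D)
    {u v : MvPolynomial σ K} (hu : u ≠ 0) (hv : v ≠ 0) {a b : D} (hab : a ≠ 0 ∨ b ≠ 0)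
    (h : C a * map f u = C b * map f v) : Associated u v := by
  have hcoeff (m) : a * f (coeff m u) = b * f (coeff m v) := by
    simpa only [coeff_C_mul, coeff_map] using congrArg (coeff m) h
  refine associated_of_coeff_mul_comm hu hv fun m m' => f.injective ?_
  rw [map_mul, map_mul]
  rcases hab with ha | hb
  · refine mul_left_cancel₀ ha ?_
    linear_combination f (coeff m' v) * hcoeff m - f (coeff m v) * hcoeff m'
  · refine mul_left_cancel₀ hb ?_
    linear_combination f (coeff m' u) * hcoeff m - f (coeff m u) * hcoeff m'

theorem not_C_dvd_C_mul_map_sub_C_mul_map {R : Type*} [CommRing R] [IsDomain R]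
    [UniqueFactorizationMonoid R] [Algebra K R] {q A B : R} (hq : ¬IsUnit q) (hq0 : q ≠ 0)
    (hAB : IsRelPrime A B) {U V : MvPolynomial σ K} (hU : U ≠ 0) (hV : V ≠ 0)
    (hUV : ¬Associated U V) :
    ¬C q ∣ C A * map (algebraMap K R) U - C B * map (algebraMap K R) V := by
  intro hdvd
  obtain ⟨π, hπ, hπq⟩ := WfDvdMonoid.exists_irreducible_factor hq hq0
  set I := Ideal.span {π}
  have : I.IsPrime := (Ideal.span_singleton_prime hπ.ne_zero).mpr hπ.prime
  set g := Ideal.Quotient.mk I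
  have hgq : g q = 0 := (Ideal.Quotient.eq_zero_iff_dvd π q).mpr hπq
  have hreduced := map_dvd (map g) hdvd
  rw [map_C, hgq, C_0, zero_dvd_iff, map_sub, map_mul, map_mul, map_C, map_C, map_map, map_map,
    sub_eq_zero] at hreduced
  refine hUV (associated_of_C_mul_map_eq (g.comp (algebraMap K R)) hU hV ?_ hreduced)
  by_contra! hAB0
  rw [Ideal.Quotient.eq_zero_iff_dvd, Ideal.Quotient.eq_zero_iff_dvd] at hAB0
  exact hπ.not_isUnit (hAB hAB0.1 hAB0.2)

theorem sumAlgEquiv_rename_inl (u : MvPolynomial σ K) :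
    sumAlgEquiv K σ τ (rename Sum.inl u) = map C u :=
  AlgHom.congr_fun (sumAlgEquiv_comp_rename_inl K σ τ) u

theorem sumAlgEquiv_rename_inr (u : MvPolynomial τ K) :
    sumAlgEquiv K σ τ (rename Sum.inr u) = C u :=
  AlgHom.congr_fun (sumAlgEquiv_comp_rename_inr K σ τ) u

end MvPolynomial

section NearSeparated

variable {σ τ K : Type*} [Field K]

noncomputable def nearSeparated (r₁ s₁ : MvPolynomial σ K) (r₂ s₂ : MvPolynomial τ K) :
    MvPolynomial (σ ⊕ τ) K :=
  rename Sum.inl r₁ * rename Sum.inr s₂ - rename Sum.inr r₂ * rename Sum.inl s₁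

theorem rename_swap_nearSeparated (r₁ s₁ : MvPolynomial σ K) (r₂ s₂ : MvPolynomial τ K) :
    rename Sum.swap (nearSeparated r₁ s₁ r₂ s₂) = -nearSeparated r₂ s₂ r₁ s₁ := by
  simp only [nearSeparated, map_sub, map_mul, rename_rename, Function.comp_def, Sum.swap_inl,
    Sum.swap_inr]
  ring

theorem not_rename_inr_dvd_nearSeparated {r₁ s₁ : MvPolynomial σ K} {r₂ s₂ q : MvPolynomial τ K}
    (hq : ¬IsUnit q) (hq0 : q ≠ 0) (hrs₂ : IsRelPrime r₂ s₂) (hr₁ : r₁ ≠ 0) (hs₁ : s₁ ≠ 0)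
    (hrs₁ : ¬Associated r₁ s₁) : ¬rename Sum.inr q ∣ nearSeparated r₁ s₁ r₂ s₂ := by
  intro hdvd
  have hiter := map_dvd (sumAlgEquiv K σ τ) hdvd
  rw [sumAlgEquiv_rename_inr, nearSeparated, map_sub, map_mul, map_mul, sumAlgEquiv_rename_inl,
    sumAlgEquiv_rename_inl, sumAlgEquiv_rename_inr, sumAlgEquiv_rename_inr] at hiter
  refine not_C_dvd_C_mul_map_sub_C_mul_map hq hq0 hrs₂.symm hr₁ hs₁ hrs₁ ?_
  rw [algebraMap_eq]
  convert hiter using 1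
  ring

end NearSeparated

/-- A near-separated polynomial `p = r₁(x)s₂(y) − r₂(y)s₁(x)` with
`gcd(r₁,s₁) = 1`, `gcd(r₂,s₂) = 1` and neither pair associated has no non-constant
factor lying in `K[x₁,…,xₙ]` or in `K[y₁,…,yₙ]`. -/
theorem near_separated_no_factor_in_x_or_y
    {K : Type*} [Field K] {n : ℕ}
    (r₁ s₁ r₂ s₂ : MvPolynomial (Fin n) K)
    (hr₁ : 0 < r₁.totalDegree) (hs₁ : 0 < s₁.totalDegree)
    (hr₂ : 0 < r₂.totalDegree) (hs₂ : 0 < s₂.totalDegree)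
    (hgcd₁ : ∀ d : MvPolynomial (Fin n) K, d ∣ r₁ → d ∣ s₁ → IsUnit d)
    (hgcd₂ : ∀ d : MvPolynomial (Fin n) K, d ∣ r₂ → d ∣ s₂ → IsUnit d)
    (hna₁ : ¬ Associated r₁ s₁) (hna₂ : ¬ Associated r₂ s₂)
    (p : MvPolynomial (Fin n ⊕ Fin n) K)
    (hp : p = rename Sum.inl r₁ * rename Sum.inr s₂ - rename Sum.inr r₂ * rename Sum.inl s₁) :
    ∀ q : MvPolynomial (Fin n) K, 0 < q.totalDegree →
      ¬ (rename Sum.inl q ∣ p) ∧ ¬ (rename Sum.inr q ∣ p) := by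
  have ne_zero {r : MvPolynomial (Fin n) K} (hr : 0 < r.totalDegree) : r ≠ 0 := by
    rintro rfl
    simp at hr
  have not_isUnit {r : MvPolynomial (Fin n) K} (hr : 0 < r.totalDegree) : ¬IsUnit r :=
    fun hu => hr.ne' (isUnit_iff_totalDegree_of_isReduced.mp hu).2
  change p = nearSeparated r₁ s₁ r₂ s₂ at hp
  subst hp
  intro q hq
  refine ⟨fun hdvd => ?_, not_rename_inr_dvd_nearSeparated (not_isUnit hq) (ne_zero hq)
    (fun _ => hgcd₂ _) (ne_zero hr₁) (ne_zero hs₁) hna₁⟩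
  have hswap := map_dvd (rename Sum.swap) hdvd
  rw [rename_rename, rename_swap_nearSeparated, dvd_neg] at hswap
  exact not_rename_inr_dvd_nearSeparated (not_isUnit hq) (ne_zero hq) (fun _ => hgcd₁ _)
    (ne_zero hr₂) (ne_zero hs₂) hna₂ hswap
end

section
/- Let p be a symmetric near-separated polynomial, i.e. p(x,y) = r(x)s(y) − s(x)r(y) for some non-associated non-constant polynomials r, s ∈ K[x₁,…,xₙ], and suppose α ∈ Kⁿ satisfies p(x₁,…,xₙ,α) ≠ 0 (as a polynomial in x). Then there exists another symmetric near-separated representation (r', s') of p (i.e. p(x,y) = r'(x)s'(y) − s'(x)r'(y)) with r'(α) = 0 and s'(α) = 1. -/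
/-!
Replacing `(r, s)` by `(a r + b s, c r + d s)` multiplies `r(x)s(y) − s(x)r(y)` by `ad − bc`.
Specialising `y = α` turns `p` into `s(α) r − r(α) s`, so `(r(α), s(α)) ≠ 0`; choosing `c, d` with
`r(α) c + s(α) d = 1`, the pair `(s(α) r − r(α) s, c r + d s)` has determinant `1` and the
required values at `α`.
-/

open MvPolynomial

namespace MvPolynomial

variable {K : Type*} [Field K] {σ : Type*}

noncomputable def symmNearSep (r s : MvPolynomial σ K) : MvPolynomial (σ ⊕ σ) K :=
  rename Sum.inl r * rename Sum.inr s - rename Sum.inl s * rename Sum.inr r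

theorem symmNearSep_smul_add_smul (r s : MvPolynomial σ K) (a b c d : K) :
    symmNearSep (a • r + b • s) (c • r + d • s) = (a * d - b * c) • symmNearSep r s := by
  simp only [symmNearSep, map_add, map_sub, map_mul, smul_eq_C_mul, rename_C]
  ring

theorem aeval_sumElim_C_symmNearSep (α : σ → K) (r s : MvPolynomial σ K) :
    aeval (Sum.elim X (fun i => C (α i))) (symmNearSep r s) = eval α s • r - eval α r • s := by
  have hinl : ∀ q : MvPolynomial σ K,
      aeval (Sum.elim X (fun i => C (α i))) (rename Sum.inl q) = q := fun q => by
    rw [aeval_rename, Sum.elim_comp_inl, aeval_X_left_apply]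
  have hinr : ∀ q : MvPolynomial σ K,
      aeval (Sum.elim X (fun i => C (α i))) (rename Sum.inr q) =
        (C (eval α q) : MvPolynomial σ K) := fun q => by
    rw [aeval_rename, Sum.elim_comp_inr]
    exact aeval_C_comp_left α q
  simp only [symmNearSep, map_sub, map_mul, hinl, hinr, smul_eq_C_mul]
  ring

theorem exists_symmNearSep_eq_eval_eq_zero_eval_eq_one {r s : MvPolynomial σ K} {α : σ → K}
    (h : eval α r ≠ 0 ∨ eval α s ≠ 0) :
    ∃ r' s', symmNearSep r' s' = symmNearSep r s ∧ eval α r' = 0 ∧ eval α s' = 1 := by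
  set a := eval α r
  set b := eval α s
  obtain ⟨c, d, hcd⟩ : ∃ c d : K, a * c + b * d = 1 := by
    rcases h with h | h
    · exact ⟨a⁻¹, 0, by simp [h]⟩
    · exact ⟨0, b⁻¹, by simp [h]⟩
  refine ⟨b • r + (-a) • s, c • r + d • s, ?_, ?_, ?_⟩
  · rw [symmNearSep_smul_add_smul, show b * d - -a * c = 1 by linear_combination hcd, one_smul]
  · rw [map_add, smul_eval, smul_eval]
    ring
  · rw [map_add, smul_eval, smul_eval]
    linear_combination hcd

end MvPolynomial

theorem symmetric_near_separated_normalized_representation_general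
    {K : Type*} [Field K] {n : ℕ}
    (r s : MvPolynomial (Fin n) K)
    (p : MvPolynomial (Fin n ⊕ Fin n) K)
    (hp : p = rename Sum.inl r * rename Sum.inr s - rename Sum.inl s * rename Sum.inr r)
    (α : Fin n → K)
    (hα : aeval (Sum.elim X (fun i => C (α i))) p ≠ (0 : MvPolynomial (Fin n) K)) :
    ∃ r' s' : MvPolynomial (Fin n) K,
      p = rename Sum.inl r' * rename Sum.inr s' - rename Sum.inl s' * rename Sum.inr r' ∧
      eval α r' = 0 ∧ eval α s' = 1 := by
  change p = symmNearSep r s at hp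
  subst hp
  have h : eval α r ≠ 0 ∨ eval α s ≠ 0 := by
    contrapose! hα
    rw [aeval_sumElim_C_symmNearSep, hα.1, hα.2, zero_smul, zero_smul, sub_zero]
  obtain ⟨r', s', hrs, hr', hs'⟩ := exists_symmNearSep_eq_eval_eq_zero_eval_eq_one h
  exact ⟨r', s', hrs.symm, hr', hs'⟩

/-- If `p(x,y) = r(x)s(y) − s(x)r(y)` is a symmetric near-separated
polynomial and `α ∈ Kⁿ` satisfies `p(x,α) ≠ 0`, then `p` has a symmetric
near-separated representation `(r',s')` with `r'(α) = 0` and `s'(α) = 1`. -/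
theorem symmetric_near_separated_normalized_representation
    {K : Type*} [Field K] {n : ℕ}
    (r s : MvPolynomial (Fin n) K)
    (hr : 0 < r.totalDegree) (hs : 0 < s.totalDegree)
    (hna : ¬ Associated r s)
    (p : MvPolynomial (Fin n ⊕ Fin n) K)
    (hp : p = rename Sum.inl r * rename Sum.inr s - rename Sum.inl s * rename Sum.inr r)
    (α : Fin n → K)
    (hα : aeval (Sum.elim X (fun i => C (α i))) p ≠ (0 : MvPolynomial (Fin n) K)) :
    ∃ r' s' : MvPolynomial (Fin n) K,
      p = rename Sum.inl r' * rename Sum.inr s' - rename Sum.inl s' * rename Sum.inr r' ∧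
      eval α r' = 0 ∧ eval α s' = 1 :=
  symmetric_near_separated_normalized_representation_general r s p hp α hα
end

section
/- Let f ∈ K(x₁,…,xₙ) be a rational function with coprime numerator f_n and denominator f_d, and suppose f = g(h) for some non-constant g ∈ K(y) and h ∈ K(x₁,…,xₙ) with coprime numerator h_n and denominator h_d. Then the polynomial h_n(x)·h_d(y) − h_d(x)·h_n(y) divides f_n(x)·f_d(y) − f_d(x)·f_n(y) in K[x₁,…,xₙ,y₁,…,yₙ]. -/
open MvPolynomial

/-- Substitution of an element `a` of a field extension of `K` into a univariate
rational function `g ∈ K(t)` (the composition `g ∘ a`). -/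
noncomputable def ratEval {K : Type*} [Field K] {L : Type*} [Field L] [Algebra K L]
    (g : RatFunc K) (a : L) : L :=
  Polynomial.aeval a g.num / Polynomial.aeval a g.denom


open MvPolynomial

noncomputable def homogSub {K A : Type*} [Field K] [CommRing A] [Algebra K A]
    (a b : A) (u : Polynomial K) (m : ℕ) : A :=
  ∑ i ∈ Finset.range (m + 1), algebraMap K A (u.coeff i) * a ^ i * b ^ (m - i)

theorem auxA_le {A : Type*} [CommRing A] (a b c e : A) {N i j : ℕ} (hj : j ≤ N) (hij : i ≤ j) :
    (a * e - b * c) ∣ a ^ i * b ^ (N - i) * c ^ j * e ^ (N - j)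
      - a ^ j * b ^ (N - j) * c ^ i * e ^ (N - i) := by
  obtain ⟨k, rfl⟩ := Nat.exists_eq_add_of_le hij
  have h1 : N - i = (N - (i + k)) + k := by omega
  have key : a ^ i * b ^ (N - i) * c ^ (i + k) * e ^ (N - (i + k))
      - a ^ (i + k) * b ^ (N - (i + k)) * c ^ i * e ^ (N - i)
      = (a ^ i * c ^ i * b ^ (N - (i + k)) * e ^ (N - (i + k))) * ((b * c) ^ k - (a * e) ^ k) := by
    rw [h1]; ring
  rw [key]
  exact Dvd.dvd.mul_left (dvd_sub_comm.mp (sub_dvd_pow_sub_pow (a * e) (b * c) k)) _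

theorem auxA {A : Type*} [CommRing A] (a b c e : A) {N i j : ℕ} (hi : i ≤ N) (hj : j ≤ N) :
    (a * e - b * c) ∣ a ^ i * b ^ (N - i) * c ^ j * e ^ (N - j)
      - a ^ j * b ^ (N - j) * c ^ i * e ^ (N - i) := by
  rcases le_total i j with h | h
  · exact auxA_le a b c e hj h
  · exact dvd_sub_comm.mp (auxA_le a b c e hi h)

theorem auxB {K A : Type*} [Field K] [CommRing A] [Algebra K A] (a b c e : A)
    (u v : Polynomial K) (N : ℕ) :
    (a * e - b * c) ∣ homogSub a b u N * homogSub c e v N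
      - homogSub a b v N * homogSub c e u N := by
  unfold homogSub
  rw [Finset.sum_mul_sum, Finset.sum_mul_sum, Finset.sum_comm (s := Finset.range (N + 1))
    (t := Finset.range (N + 1)), ← Finset.sum_sub_distrib]
  refine Finset.dvd_sum fun i hi => ?_
  rw [← Finset.sum_sub_distrib]
  refine Finset.dvd_sum fun j hj => ?_
  have hi' : i ≤ N := Nat.lt_succ_iff.mp (Finset.mem_range.mp hi)
  have hj' : j ≤ N := Nat.lt_succ_iff.mp (Finset.mem_range.mp hj)
  have key : algebraMap K A (u.coeff j) * a ^ j * b ^ (N - j)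
        * (algebraMap K A (v.coeff i) * c ^ i * e ^ (N - i))
      - algebraMap K A (v.coeff i) * a ^ i * b ^ (N - i)
        * (algebraMap K A (u.coeff j) * c ^ j * e ^ (N - j))
      = (algebraMap K A (u.coeff j) * algebraMap K A (v.coeff i)) *
        (a ^ j * b ^ (N - j) * c ^ i * e ^ (N - i)
          - a ^ i * b ^ (N - i) * c ^ j * e ^ (N - j)) := by ring
  rw [key]
  exact Dvd.dvd.mul_left (auxA a b c e hj' hi') _

theorem homogSub_map {K A F : Type*} [Field K] [CommRing A] [Algebra K A] [Field F] [Algebra K F]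
    (φ : A →ₐ[K] F) (a b : A) (hb : φ b ≠ 0) (u : Polynomial K) (m : ℕ) (hm : u.natDegree ≤ m) :
    φ (homogSub a b u m) = φ b ^ m * Polynomial.aeval (φ a / φ b) u := by
  rw [Polynomial.aeval_eq_sum_range' (Nat.lt_succ_of_le hm)]
  unfold homogSub
  rw [map_sum, Finset.mul_sum]
  refine Finset.sum_congr rfl fun i hi => ?_
  have hi' : i ≤ m := Nat.lt_succ_iff.mp (Finset.mem_range.mp hi)
  rw [map_mul, map_mul, map_pow, map_pow, AlgHom.commutes, Algebra.smul_def, div_pow]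
  have hbm : φ b ^ m = φ b ^ (m - i) * φ b ^ i := by rw [← pow_add]; congr 1; omega
  rw [hbm]
  field_simp

theorem homogSub_algHom {K A B : Type*} [Field K] [CommRing A] [CommRing B] [Algebra K A]
    [Algebra K B] (ψ : A →ₐ[K] B) (a b : A) (u : Polynomial K) (m : ℕ) :
    ψ (homogSub a b u m) = homogSub (ψ a) (ψ b) u m := by
  unfold homogSub
  rw [map_sum]
  refine Finset.sum_congr rfl fun i _ => ?_
  rw [map_mul, map_mul, map_pow, map_pow, AlgHom.commutes]

theorem isRelPrime_homogSub {K A : Type*} [Field K] [CommRing A] [DecompositionMonoid A] [Algebra K A]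
    (a b : A) (hab : IsRelPrime a b) (u : Polynomial K) (hu : u ≠ 0) {m : ℕ}
    (hm : u.natDegree = m) : IsRelPrime b (homogSub a b u m) := by
  subst hm
  set m := u.natDegree with hmdef
  have hsplit : homogSub a b u m
      = algebraMap K A (u.coeff m) * a ^ m
        + b * ∑ i ∈ Finset.range m, algebraMap K A (u.coeff i) * a ^ i * b ^ (m - 1 - i) := by
    unfold homogSub
    rw [Finset.sum_range_succ, Nat.sub_self, pow_zero, mul_one, add_comm, Finset.mul_sum]
    congr 1
    refine Finset.sum_congr rfl fun i hi => ?_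
    have hilt : i < m := Finset.mem_range.mp hi
    have h2 : m - i = (m - 1 - i) + 1 := by omega
    rw [h2, pow_succ]
    ring
  intro d hdb hdP
  have hda : d ∣ algebraMap K A (u.coeff m) * a ^ m := by
    have h3 : algebraMap K A (u.coeff m) * a ^ m
        = homogSub a b u m
          - b * ∑ i ∈ Finset.range m, algebraMap K A (u.coeff i) * a ^ i * b ^ (m - 1 - i) := by
      rw [hsplit]; ring
    rw [h3]
    exact dvd_sub hdP (hdb.mul_right _)
  have hc0 : u.coeff m ≠ 0 := by
    simpa [hmdef, Polynomial.coeff_natDegree] using Polynomial.leadingCoeff_ne_zero.mpr hu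
  have hunit : IsUnit (algebraMap K A (u.coeff m)) :=
    (isUnit_iff_ne_zero.mpr hc0).map (algebraMap K A)
  have hda' : d ∣ a ^ m := by
    obtain ⟨v, hv⟩ := hunit
    have : a ^ m = ↑v⁻¹ * (algebraMap K A (u.coeff m) * a ^ m) := by
      rw [← hv, ← mul_assoc, Units.inv_mul, one_mul]
    rw [this]
    exact hda.mul_left _
  exact hab.pow_left hda' hdb

set_option maxHeartbeats 2000000 in
/-- If `f = fn/fd ∈ K(x₁,…,xₙ)` with `gcd(fn,fd) = 1` satisfies
`f = g(h)` for a non-constant `g ∈ K(y)` and `h = hn/hd` with `gcd(hn,hd) = 1`, then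
`hn(x)hd(y) − hd(x)hn(y)` divides `fn(x)fd(y) − fd(x)fn(y)` in `K[x₁,…,xₙ,y₁,…,yₙ]`. -/
theorem near_separated_dvd_of_decomposition
    {K : Type*} [Field K] {n : ℕ}
    (fn fd hn hd : MvPolynomial (Fin n) K)
    (hfd : fd ≠ 0) (hhd : hd ≠ 0)
    (hcopf : ∀ d : MvPolynomial (Fin n) K, d ∣ fn → d ∣ fd → IsUnit d)
    (hcoph : ∀ d : MvPolynomial (Fin n) K, d ∣ hn → d ∣ hd → IsUnit d)
    (g : RatFunc K) (hg : 0 < max g.num.natDegree g.denom.natDegree)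
    (hcomp :
      (algebraMap (MvPolynomial (Fin n) K) (FractionRing (MvPolynomial (Fin n) K)) fn) /
        (algebraMap (MvPolynomial (Fin n) K) (FractionRing (MvPolynomial (Fin n) K)) fd) =
      ratEval g
        ((algebraMap (MvPolynomial (Fin n) K) (FractionRing (MvPolynomial (Fin n) K)) hn) /
          (algebraMap (MvPolynomial (Fin n) K) (FractionRing (MvPolynomial (Fin n) K)) hd))) :
    (rename Sum.inl hn * rename Sum.inr hd - rename Sum.inl hd * rename Sum.inr hn) ∣
      (rename Sum.inl fn * rename Sum.inr fd - rename Sum.inl fd * rename Sum.inr fn :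
        MvPolynomial (Fin n ⊕ Fin n) K) := by
  classical
  by_cases hfn0 : fn = 0
  · subst hfn0; simp
  set φ : MvPolynomial (Fin n) K →ₐ[K] FractionRing (MvPolynomial (Fin n) K) :=
    IsScalarTower.toAlgHom K (MvPolynomial (Fin n) K) (FractionRing (MvPolynomial (Fin n) K))
    with hφ
  have hφeq : ∀ x : MvPolynomial (Fin n) K,
      φ x = algebraMap (MvPolynomial (Fin n) K) (FractionRing (MvPolynomial (Fin n) K)) x :=
    fun x => congrFun (IsScalarTower.coe_toAlgHom' K (MvPolynomial (Fin n) K) (FractionRing (MvPolynomial (Fin n) K))) x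
  have hφinj : Function.Injective φ :=
    IsFractionRing.injective (MvPolynomial (Fin n) K) (FractionRing (MvPolynomial (Fin n) K))
  have hcoph' : IsRelPrime hn hd := fun d h1 h2 => hcoph d h1 h2
  have hbd : φ hd ≠ 0 := fun h => hhd (hφinj (by simpa using h))
  have hfd' : φ fd ≠ 0 := fun h => hfd (hφinj (by simpa using h))
  have hfn' : φ fn ≠ 0 := fun h => hfn0 (hφinj (by simpa using h))
  set p := g.num with hp
  set q := g.denom with hq
  set N := max p.natDegree q.natDegree with hN
  set H : FractionRing (MvPolynomial (Fin n) K) := φ hn / φ hd with hH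
  set P := homogSub hn hd p N with hPdef
  set Q := homogSub hn hd q N with hQdef
  have hPm : φ P = φ hd ^ N * Polynomial.aeval H p :=
    homogSub_map φ hn hd hbd p N (le_max_left _ _)
  have hQm : φ Q = φ hd ^ N * Polynomial.aeval H q :=
    homogSub_map φ hn hd hbd q N (le_max_right _ _)
  have hcomp' : φ fn / φ fd = Polynomial.aeval H p / Polynomial.aeval H q := by
    rw [hφeq, hφeq]
    exact hcomp
  have hqH : Polynomial.aeval H q ≠ 0 := by
    intro h
    rw [h, div_zero, div_eq_zero_iff] at hcomp'
    rcases hcomp' with h1 | h1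
    · exact hfn' h1
    · exact hfd' h1
  have hpH : Polynomial.aeval H p ≠ 0 := by
    intro h
    rw [h, zero_div, div_eq_zero_iff] at hcomp'
    rcases hcomp' with h1 | h1
    · exact hfn' h1
    · exact hfd' h1
  have e1 : φ fn * Polynomial.aeval H q = Polynomial.aeval H p * φ fd :=
    (div_eq_div_iff hfd' hqH).mp hcomp'
  have hcross : fn * Q = fd * P := by
    apply hφinj
    rw [map_mul, map_mul, hQm, hPm]
    calc φ fn * (φ hd ^ N * Polynomial.aeval H q)
        = φ hd ^ N * (φ fn * Polynomial.aeval H q) := by ring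
      _ = φ hd ^ N * (Polynomial.aeval H p * φ fd) := by rw [e1]
      _ = φ fd * (φ hd ^ N * Polynomial.aeval H p) := by ring
  -- coprimality of P and Q
  have hPQ : ∀ d : MvPolynomial (Fin n) K, d ∣ P → d ∣ Q → IsUnit d := by
    obtain ⟨ap, bp, hab⟩ := RatFunc.isCoprime_num_denom g
    set M := max ap.natDegree bp.natDegree with hM
    have haeval1 : Polynomial.aeval H ap * Polynomial.aeval H p
        + Polynomial.aeval H bp * Polynomial.aeval H q = 1 := by
      have := congrArg (Polynomial.aeval H) hab
      simpa [map_add, map_mul] using this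
    have hid : homogSub hn hd ap M * P + homogSub hn hd bp M * Q = hd ^ (M + N) := by
      apply hφinj
      rw [map_add, map_mul, map_mul, map_pow,
        homogSub_map φ hn hd hbd ap M (le_max_left _ _),
        homogSub_map φ hn hd hbd bp M (le_max_right _ _), hPm, hQm, pow_add]
      calc φ hd ^ M * Polynomial.aeval H ap * (φ hd ^ N * Polynomial.aeval H p)
            + φ hd ^ M * Polynomial.aeval H bp * (φ hd ^ N * Polynomial.aeval H q)
          = φ hd ^ M * φ hd ^ N * (Polynomial.aeval H ap * Polynomial.aeval H p
            + Polynomial.aeval H bp * Polynomial.aeval H q) := by ring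
        _ = φ hd ^ M * φ hd ^ N := by rw [haeval1, mul_one]
    intro d hdP hdQ
    have hdhd : d ∣ hd ^ (M + N) := by
      rw [← hid]
      exact dvd_add (hdP.mul_left _) (hdQ.mul_left _)
    by_cases hqN : q.natDegree = N
    · have hrel : IsRelPrime hd Q :=
        isRelPrime_homogSub hn hd hcoph' q (RatFunc.denom_ne_zero g) hqN
      exact hrel.pow_left hdhd hdQ
    · have hqle : q.natDegree ≤ N := le_max_right _ _
      have hp0 : p ≠ 0 := by
        intro h
        apply hqN
        rw [hN, h, Polynomial.natDegree_zero] at *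
        omega
      have hpN : p.natDegree = N := by
        rcases max_choice p.natDegree q.natDegree with h | h
        · exact h.symm
        · exact absurd h.symm hqN
      have hrel : IsRelPrime hd P := isRelPrime_homogSub hn hd hcoph' p hp0 hpN
      exact hrel.pow_left hdhd hdP
  -- extract the unit
  have hrelf : IsRelPrime fd fn := fun d h1 h2 => hcopf d h2 h1
  have hfdQ : fd ∣ Q := hrelf.dvd_of_dvd_mul_left ⟨P, hcross⟩
  obtain ⟨w, hw⟩ := hfdQ
  have hPw : P = fn * w := by
    have h2 : fd * (fn * w) = fd * P := by
      rw [← hcross, hw]; ring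
    exact (mul_left_cancel₀ hfd h2).symm
  have hwu : IsUnit w := hPQ w ⟨fn, by rw [hPw]; ring⟩ ⟨fd, by rw [hw]; ring⟩
  -- final divisibility
  set ρ₁ : MvPolynomial (Fin n) K →ₐ[K] MvPolynomial (Fin n ⊕ Fin n) K :=
    rename Sum.inl with hρ₁
  set ρ₂ : MvPolynomial (Fin n) K →ₐ[K] MvPolynomial (Fin n ⊕ Fin n) K :=
    rename Sum.inr with hρ₂
  have hB : (ρ₁ hn * ρ₂ hd - ρ₁ hd * ρ₂ hn) ∣
      (homogSub (ρ₁ hn) (ρ₁ hd) p N * homogSub (ρ₂ hn) (ρ₂ hd) q N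
        - homogSub (ρ₁ hn) (ρ₁ hd) q N * homogSub (ρ₂ hn) (ρ₂ hd) p N) :=
    auxB (ρ₁ hn) (ρ₁ hd) (ρ₂ hn) (ρ₂ hd) p q N
  rw [← homogSub_algHom ρ₁ hn hd p N, ← homogSub_algHom ρ₂ hn hd q N,
    ← homogSub_algHom ρ₁ hn hd q N, ← homogSub_algHom ρ₂ hn hd p N,
    ← hPdef, ← hQdef] at hB
  have hfact : ρ₁ P * ρ₂ Q - ρ₁ Q * ρ₂ P
      = (ρ₁ w * ρ₂ w) * (ρ₁ fn * ρ₂ fd - ρ₁ fd * ρ₂ fn) := by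
    rw [hPw, hw, map_mul, map_mul, map_mul, map_mul]
    ring
  rw [hfact] at hB
  have hu : IsUnit (ρ₁ w * ρ₂ w) := (hwu.map ρ₁).mul (hwu.map ρ₂)
  obtain ⟨v, hv⟩ := hu
  have hE : (ρ₁ fn * ρ₂ fd - ρ₁ fd * ρ₂ fn)
      = ↑v⁻¹ * ((ρ₁ w * ρ₂ w) * (ρ₁ fn * ρ₂ fd - ρ₁ fd * ρ₂ fn)) := by
    rw [← hv, ← mul_assoc, Units.inv_mul, one_mul]
  show (ρ₁ hn * ρ₂ hd - ρ₁ hd * ρ₂ hn) ∣ (ρ₁ fn * ρ₂ fd - ρ₁ fd * ρ₂ fn)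
  rw [hE]
  exact hB.mul_left _
end

section
/- Let g ∈ K(y) be a univariate rational function and h ∈ K(x₁,…,xₙ) a multivariate rational function, both non-constant, and let f = g(h). Then deg f = (deg g)·(deg h), where the degree of a rational function written in lowest terms p/q is max(deg p, deg q) (total degree). -/
/-!
Write `g = p / q` in lowest terms, `m = max (deg p) (deg q)`, and let `P = hd^m p(hn/hd)` and
`Q = hd^m q(hn/hd)` be the evaluations of the degree-`m` homogenizations of `p` and `q` at
`(hn, hd)`, so that `f = P / Q`. A Bézout relation `a p + b q = 1` homogenizes to
`A P + B Q = hd ^ N`, while `P ≡ p_m hn^m` and `Q ≡ q_m hn^m` modulo `hd`; since `hn` and `hd`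
are coprime, so are `P` and `Q`, hence `fn, fd` agree with `P, Q` up to units.

With `D = max (deg hn) (deg hd)`, both `P` and `Q` have degree at most `m D`, and their
components of degree `m D` are the same homogenized evaluations at the components `(U, V)` of
degree `D` of `(hn, hd)`. These cannot both vanish: the homogenized Bézout relation forces
`V = 0`, and then they are `p_m U^m` and `q_m U^m` with `U ≠ 0`.

Finally `Q ≠ 0` because `h = hn / hd` is transcendental over `K`: an algebraic element of
`K(x)` is integral over the integrally closed ring `K[x]`, and a polynomial of positive degree
`k` is not algebraic, as the component of degree `N k` of `q(z)` is `q_N (top z)^N`.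
-/

open MvPolynomial

theorem IsRelPrime.associated_of_mul_eq_mul {α : Type*} [CommMonoidWithZero α]
    [IsCancelMulZero α] [DecompositionMonoid α] {a b c d : α} (hab : IsRelPrime a b)
    (hcd : IsRelPrime c d) (h : a * d = b * c) : Associated a c ∧ Associated b d :=
  ⟨associated_of_dvd_dvd (hab.dvd_of_dvd_mul_left ⟨d, h.symm⟩)
      (hcd.dvd_of_dvd_mul_right ⟨b, h.trans (mul_comm b c)⟩),
    associated_of_dvd_dvd (hab.symm.dvd_of_dvd_mul_left ⟨c, h⟩)
      (hcd.symm.dvd_of_dvd_mul_right ⟨a, h.symm.trans (mul_comm a d)⟩)⟩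

namespace MvPolynomial

section CommSemiring

variable {σ R : Type*} [CommSemiring R]

theorem homogeneousComponent_mul_of_totalDegree_le {u v : MvPolynomial σ R} {a b : ℕ}
    (hu : u.totalDegree ≤ a) (hv : v.totalDegree ≤ b) :
    homogeneousComponent (a + b) (u * v) =
      homogeneousComponent a u * homogeneousComponent b v := by
  classical
  ext d
  simp only [coeff_homogeneousComponent, coeff_mul]
  split_ifs with hd
  · refine Finset.sum_congr rfl fun x hx => ?_
    have hdeg : x.1.degree + x.2.degree = a + b := by
      rw [← map_add, Finset.HasAntidiagonal.mem_antidiagonal.mp hx, hd]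
    by_cases h1 : x.1.degree = a
    · rw [if_pos h1, if_pos (by omega)]
    rw [if_neg h1]
    rcases Nat.lt_or_gt_of_ne h1 with h | h
    · rw [coeff_eq_zero_of_totalDegree_lt (f := v) (by rw [← Finsupp.degree_apply]; omega)]
      simp
    · rw [coeff_eq_zero_of_totalDegree_lt (f := u) (by rw [← Finsupp.degree_apply]; omega)]
      simp
  · refine (Finset.sum_eq_zero fun x hx => ?_).symm
    have hdeg : x.1.degree + x.2.degree ≠ a + b := by
      rwa [← map_add, Finset.HasAntidiagonal.mem_antidiagonal.mp hx]
    split_ifs <;> first | omega | simp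

theorem homogeneousComponent_pow_of_totalDegree_le {u : MvPolynomial σ R} {a : ℕ}
    (hu : u.totalDegree ≤ a) (k : ℕ) :
    homogeneousComponent (k * a) (u ^ k) = homogeneousComponent a u ^ k := by
  induction k with
  | zero => simp [homogeneousComponent_zero]
  | succ k ih =>
    have hk : (u ^ k).totalDegree ≤ k * a :=
      (totalDegree_pow u k).trans (Nat.mul_le_mul_left k hu)
    rw [pow_succ, add_one_mul, homogeneousComponent_mul_of_totalDegree_le hk hu, ih, pow_succ]

theorem homogeneousComponent_prod_of_totalDegree_le {ι : Type*} (s : Finset ι)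
    (f : ι → MvPolynomial σ R) (a : ι → ℕ) (hf : ∀ i ∈ s, (f i).totalDegree ≤ a i) :
    homogeneousComponent (∑ i ∈ s, a i) (∏ i ∈ s, f i) =
      ∏ i ∈ s, homogeneousComponent (a i) (f i) := by
  classical
  induction s using Finset.induction_on with
  | empty => simp [homogeneousComponent_zero]
  | insert j s hj ih =>
    rw [Finset.forall_mem_insert] at hf
    have hs : (∏ i ∈ s, f i).totalDegree ≤ ∑ i ∈ s, a i :=
      (totalDegree_finsetProd s f).trans (Finset.sum_le_sum hf.2)
    rw [Finset.sum_insert hj, Finset.prod_insert hj, Finset.prod_insert hj,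
      homogeneousComponent_mul_of_totalDegree_le hf.1 hs, ih hf.2]

theorem homogeneousComponent_totalDegree_ne_zero {w : MvPolynomial σ R} (hw : w ≠ 0) :
    homogeneousComponent w.totalDegree w ≠ 0 := by
  obtain ⟨d, hd, hdeg⟩ := Finset.exists_mem_eq_sup w.support (support_nonempty.mpr hw)
    fun d => d.degree
  intro h
  have := congrArg (coeff d) h
  rw [coeff_homogeneousComponent, if_pos (by rw [← hdeg]; rfl), coeff_zero] at this
  exact mem_support_iff.mp hd this

theorem dvd_aeval_sub_aeval {ι A : Type*} [CommRing A] [Algebra R A] (F : MvPolynomial ι R)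
    {f g : ι → A} {y : A} (h : ∀ i, y ∣ f i - g i) : y ∣ aeval f F - aeval g F := by
  rw [← Ideal.mem_span_singleton, ← Ideal.Quotient.eq, ← Ideal.Quotient.mkₐ_eq_mk R,
    ← AlgHom.comp_apply, ← AlgHom.comp_apply, comp_aeval, comp_aeval]
  congr 2
  ext i
  exact Ideal.Quotient.eq.mpr (Ideal.mem_span_singleton.mpr (h i))

namespace IsHomogeneous

variable {ι : Type*} {H : MvPolynomial ι R} {m D : ℕ} {w : ι → MvPolynomial σ R}

theorem totalDegree_aeval_le (hH : H.IsHomogeneous m) (hw : ∀ i, (w i).totalDegree ≤ D) :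
    (MvPolynomial.aeval w H).totalDegree ≤ m * D := by
  rw [H.as_sum, map_sum]
  refine totalDegree_finsetSum_le fun d hd => ?_
  rw [aeval_monomial, algebraMap_eq, Finsupp.prod, hH.degree_eq_sum_deg_support hd,
    Finset.sum_mul]
  refine (totalDegree_mul _ _).trans ?_
  rw [totalDegree_C, zero_add]
  exact (totalDegree_finsetProd _ _).trans <| Finset.sum_le_sum fun i _ =>
    (totalDegree_pow _ _).trans (Nat.mul_le_mul_left _ (hw i))

theorem homogeneousComponent_aeval (hH : H.IsHomogeneous m)
    (hw : ∀ i, (w i).totalDegree ≤ D) :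
    homogeneousComponent (m * D) (MvPolynomial.aeval w H) =
      MvPolynomial.aeval (fun i => homogeneousComponent D (w i)) H := by
  conv_lhs => rw [H.as_sum]
  conv_rhs => rw [H.as_sum]
  simp only [map_sum]
  refine Finset.sum_congr rfl fun d hd => ?_
  rw [aeval_monomial, aeval_monomial, algebraMap_eq, homogeneousComponent_C_mul, Finsupp.prod,
    Finsupp.prod, hH.degree_eq_sum_deg_support hd, Finset.sum_mul,
    homogeneousComponent_prod_of_totalDegree_le _ _ _ fun i _ =>
      (totalDegree_pow _ _).trans (Nat.mul_le_mul_left _ (hw i))]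
  exact congrArg _ <| Finset.prod_congr rfl fun i _ =>
    homogeneousComponent_pow_of_totalDegree_le (hw i) _

end IsHomogeneous

end CommSemiring

end MvPolynomial

namespace Polynomial

section Evaluation

variable {R A : Type*} [CommSemiring R] [CommRing A] [Algebra R A]

theorem aeval_homogenize_vecCons_zero (p : R[X]) (m : ℕ) (x : A) :
    MvPolynomial.aeval ![x, 0] (p.homogenize m) = algebraMap R A (p.coeff m) * x ^ m := by
  rw [homogenize, map_sum, Finset.sum_eq_single (m, 0)]
  · simp [MvPolynomial.aeval_monomial, Finsupp.prod_fintype]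
  · rintro ⟨k, l⟩ hkl hne
    have hl : l ≠ 0 := by rintro rfl; simp_all
    simp [MvPolynomial.aeval_monomial, Finsupp.prod_fintype, hl]
  · simp

theorem dvd_aeval_homogenize_sub (p : R[X]) (m : ℕ) (x y : A) :
    y ∣ MvPolynomial.aeval ![x, y] (p.homogenize m) - algebraMap R A (p.coeff m) * x ^ m := by
  rw [← aeval_homogenize_vecCons_zero]
  refine MvPolynomial.dvd_aeval_sub_aeval _ fun i => ?_
  fin_cases i <;> simp

theorem homogenize_mul_add_homogenize_mul {a b p q : R[X]} {s m : ℕ}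
    (hab : a * p + b * q = 1) (ha : a.natDegree ≤ s) (hb : b.natDegree ≤ s)
    (hp : p.natDegree ≤ m) (hq : q.natDegree ≤ m) :
    a.homogenize s * p.homogenize m + b.homogenize s * q.homogenize m =
      MvPolynomial.X 1 ^ (s + m) := by
  rw [← homogenize_mul _ _ ha hp, ← homogenize_mul _ _ hb hq, ← homogenize_add, hab,
    homogenize_one]

end Evaluation

theorem aeval_homogenize_eq_aeval_div_mul {K L : Type*} [Field K] [Field L] [Algebra K L]
    {r : K[X]} {m : ℕ} (hr : r.natDegree ≤ m) (w : Fin 2 → L) (hw : w 1 ≠ 0) :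
    MvPolynomial.aeval w (r.homogenize m) = aeval (w 0 / w 1) r * w 1 ^ m := by
  rw [MvPolynomial.aeval_def, ← MvPolynomial.eval_map, ← homogenize_map,
    eval_homogenize ((natDegree_map_le).trans hr) w hw, eval_map_algebraMap]

section Coprime

variable {K : Type*} [Field K] {p q : K[X]}

theorem coeff_max_natDegree_ne_zero_of_isCoprime (hpq : IsCoprime p q) :
    p.coeff (max p.natDegree q.natDegree) ≠ 0 ∨
      q.coeff (max p.natDegree q.natDegree) ≠ 0 := by
  rcases eq_or_ne p 0 with rfl | hp
  · right
    have hq : q ≠ 0 := by rintro rfl; exact not_isCoprime_zero_zero hpq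
    simpa using hq
  rcases le_total q.natDegree p.natDegree with h | h
  · left; simpa [max_eq_left h] using hp
  · rcases eq_or_ne q 0 with rfl | hq
    · left; simpa using hp
    · right; simpa [max_eq_right h] using hq

variable {A : Type*} [CommRing A] [Algebra K A]

theorem aeval_homogenize_ne_zero_or [IsDomain A] (hpq : IsCoprime p q) {x y : A}
    (hxy : x ≠ 0 ∨ y ≠ 0) :
    MvPolynomial.aeval ![x, y] (p.homogenize (max p.natDegree q.natDegree)) ≠ 0 ∨
      MvPolynomial.aeval ![x, y] (q.homogenize (max p.natDegree q.natDegree)) ≠ 0 := by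
  have hcoeff := coeff_max_natDegree_ne_zero_of_isCoprime hpq
  obtain ⟨a, b, hab⟩ := hpq
  have hbezout := congrArg (MvPolynomial.aeval ![x, y])
    (homogenize_mul_add_homogenize_mul hab (le_max_left a.natDegree b.natDegree)
      (le_max_right _ _) (le_max_left _ q.natDegree) (le_max_right p.natDegree _))
  simp only [map_add, map_mul, map_pow, MvPolynomial.aeval_X] at hbezout
  by_contra! h
  rw [h.1, h.2, mul_zero, mul_zero, add_zero, Matrix.cons_val_one, Matrix.cons_val_zero]
    at hbezout
  obtain rfl : y = 0 := (pow_eq_zero_iff'.mp hbezout.symm).1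
  have hx : x ≠ 0 := hxy.resolve_right (not_not.mpr rfl)
  rw [aeval_homogenize_vecCons_zero, aeval_homogenize_vecCons_zero] at h
  rcases hcoeff with hc | hc
  · exact mul_ne_zero (by simpa using hc) (pow_ne_zero _ hx) h.1
  · exact mul_ne_zero (by simpa using hc) (pow_ne_zero _ hx) h.2

theorem isRelPrime_aeval_homogenize [DecompositionMonoid A] (hpq : IsCoprime p q) {x y : A}
    (hxy : IsRelPrime x y) :
    IsRelPrime (MvPolynomial.aeval ![x, y] (p.homogenize (max p.natDegree q.natDegree)))
      (MvPolynomial.aeval ![x, y] (q.homogenize (max p.natDegree q.natDegree))) := by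
  set m := max p.natDegree q.natDegree
  have hcoeff := coeff_max_natDegree_ne_zero_of_isCoprime hpq
  have hrel (r : K[X]) (hr : r.coeff m ≠ 0) :
      IsRelPrime (MvPolynomial.aeval ![x, y] (r.homogenize m)) y := by
    obtain ⟨c, hc⟩ := dvd_aeval_homogenize_sub r m x y
    rw [sub_eq_iff_eq_add'.mp hc]
    refine IsRelPrime.add_mul_left_left ?_ c
    exact (isRelPrime_mul_unit_left_left ((isUnit_iff_ne_zero.mpr hr).map _)).mpr hxy.pow_left
  obtain ⟨a, b, hab⟩ := hpq
  have hbezout := congrArg (MvPolynomial.aeval ![x, y])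
    (homogenize_mul_add_homogenize_mul hab (le_max_left a.natDegree b.natDegree)
      (le_max_right _ _) (le_max_left _ q.natDegree) (le_max_right p.natDegree _))
  simp only [map_add, map_mul, map_pow, MvPolynomial.aeval_X, Matrix.cons_val_one,
    Matrix.cons_val_zero] at hbezout
  intro d hdp hdq
  have hdy : d ∣ y ^ (max a.natDegree b.natDegree + m) :=
    hbezout ▸ dvd_add (dvd_mul_of_dvd_right hdp _) (dvd_mul_of_dvd_right hdq _)
  rcases hcoeff with hc | hc
  · exact (hrel p hc).pow_right hdp hdy
  · exact (hrel q hc).pow_right hdq hdy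

end Coprime

end Polynomial

namespace MvPolynomial

open scoped Polynomial

open Polynomial (isHomogeneous_homogenize aeval_homogenize_vecCons_zero)

variable {σ : Type*}

section Domain

variable {R : Type*} [CommRing R] [IsDomain R]

theorem _root_.Associated.totalDegree_eq {a b : MvPolynomial σ R} (h : Associated a b) :
    a.totalDegree = b.totalDegree := by
  rcases eq_or_ne a 0 with rfl | ha
  · rw [h.eq_zero_iff.mp rfl]
  exact le_antisymm (totalDegree_le_of_dvd_of_isDomain h.dvd (h.ne_zero_iff.mp ha))
    (totalDegree_le_of_dvd_of_isDomain h.symm.dvd ha)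

theorem totalDegree_eq_zero_of_isAlgebraic {z : MvPolynomial σ R} (hz : IsAlgebraic R z) :
    z.totalDegree = 0 := by
  obtain ⟨q, hq, hqz⟩ := hz
  by_contra hk
  set k := z.totalDegree
  have hz0 : z ≠ 0 := by rintro rfl; simp [k] at hk
  have hw : ∀ i, (![z, 1] i).totalDegree ≤ k := Fin.forall_fin_two.mpr ⟨le_rfl, by simp⟩
  have htop := (isHomogeneous_homogenize (n := q.natDegree) q).homogeneousComponent_aeval hw
  have hvec : (fun i => homogeneousComponent k (![z, 1] i)) =
      ![homogeneousComponent k z, 0] := by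
    funext i
    fin_cases i
    · rfl
    · exact homogeneousComponent_eq_zero _ _ (by simpa using Nat.pos_of_ne_zero hk)
  rw [hvec, aeval_homogenize_vecCons_zero, Polynomial.aeval_homogenize_of_eq_one le_rfl _ rfl,
    Matrix.cons_val_zero, hqz, map_zero] at htop
  exact mul_ne_zero (by simpa using hq)
    (pow_ne_zero _ (homogeneousComponent_totalDegree_ne_zero hz0)) htop.symm

end Domain

section Field

variable {K : Type*} [Field K]

theorem max_totalDegree_aeval_homogenize {p q : K[X]} (hpq : IsCoprime p q)
    (u v : MvPolynomial σ K) :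
    max (aeval ![u, v] (p.homogenize (max p.natDegree q.natDegree))).totalDegree
        (aeval ![u, v] (q.homogenize (max p.natDegree q.natDegree))).totalDegree =
      max p.natDegree q.natDegree * max u.totalDegree v.totalDegree := by
  set m := max p.natDegree q.natDegree
  set D := max u.totalDegree v.totalDegree
  have hw : ∀ i, (![u, v] i).totalDegree ≤ D :=
    Fin.forall_fin_two.mpr ⟨le_max_left _ _, le_max_right _ _⟩
  have hle (r : K[X]) : (aeval ![u, v] (r.homogenize m)).totalDegree ≤ m * D :=
    (isHomogeneous_homogenize r).totalDegree_aeval_le hw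
  refine le_antisymm (max_le (hle p) (hle q)) ?_
  rcases Nat.eq_zero_or_pos D with hD | hD
  · simp [hD]
  have htop (r : K[X]) : homogeneousComponent (m * D) (aeval ![u, v] (r.homogenize m)) =
      aeval ![homogeneousComponent D u, homogeneousComponent D v] (r.homogenize m) := by
    rw [(isHomogeneous_homogenize r).homogeneousComponent_aeval hw]
    congr 2 with i
    fin_cases i <;> rfl
  have hUV : homogeneousComponent D u ≠ 0 ∨ homogeneousComponent D v ≠ 0 := by
    rcases max_choice u.totalDegree v.totalDegree with h | h
    · left
      rw [show D = u.totalDegree from h]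
      exact homogeneousComponent_totalDegree_ne_zero (by rintro rfl; simp_all [D])
    · right
      rw [show D = v.totalDegree from h]
      exact homogeneousComponent_totalDegree_ne_zero (by rintro rfl; simp_all [D])
  have hge (F : MvPolynomial σ K) (hF : homogeneousComponent (m * D) F ≠ 0) :
      m * D ≤ F.totalDegree :=
    not_lt.mp (mt (homogeneousComponent_eq_zero _ _) hF)
  rcases Polynomial.aeval_homogenize_ne_zero_or hpq hUV with h | h
  · exact (hge _ (htop p ▸ h)).trans (le_max_left _ _)
  · exact (hge _ (htop q ▸ h)).trans (le_max_right _ _)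

theorem exists_algebraMap_eq_of_isAlgebraic {x : FractionRing (MvPolynomial σ K)}
    (hx : IsAlgebraic K x) : ∃ c : K, algebraMap K _ c = x := by
  obtain ⟨z, rfl⟩ := IsIntegrallyClosed.isIntegral_iff.mp
    (hx.isIntegral.tower_top (A := MvPolynomial σ K))
  have hz : z.totalDegree = 0 := totalDegree_eq_zero_of_isAlgebraic <|
    (isAlgebraic_algebraMap_iff
      (IsFractionRing.injective (MvPolynomial σ K) (FractionRing (MvPolynomial σ K)))).mp hx
  refine ⟨coeff 0 z, ?_⟩
  rw [IsScalarTower.algebraMap_apply K (MvPolynomial σ K), algebraMap_eq,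
    ← totalDegree_eq_zero_iff_eq_C.mp hz]

theorem algebraMap_aeval_homogenize {r : K[X]} {m : ℕ} (hr : r.natDegree ≤ m)
    (u : MvPolynomial σ K) {v : MvPolynomial σ K} (hv : v ≠ 0) :
    algebraMap _ (FractionRing (MvPolynomial σ K)) (aeval ![u, v] (r.homogenize m)) =
      Polynomial.aeval (algebraMap _ _ u / algebraMap _ _ v) r * algebraMap _ _ v ^ m := by
  rw [← aeval_algebraMap_apply,
    Polynomial.aeval_homogenize_eq_aeval_div_mul hr _ (by simpa using hv)]
  rfl

theorem transcendental_div_of_isRelPrime {u v : MvPolynomial σ K} (huv : IsRelPrime u v)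
    (hv : v ≠ 0) (hdeg : 0 < max u.totalDegree v.totalDegree) :
    Transcendental K (algebraMap _ (FractionRing (MvPolynomial σ K)) u / algebraMap _ _ v) := by
  intro halg
  obtain ⟨c, hc⟩ := exists_algebraMap_eq_of_isAlgebraic halg
  have huc : u = C c * v := by
    refine IsFractionRing.injective (MvPolynomial σ K) (FractionRing (MvPolynomial σ K)) ?_
    rw [map_mul, ← algebraMap_eq, ← IsScalarTower.algebraMap_apply, hc,
      div_mul_cancel₀ _ ((map_ne_zero_iff _ (IsFractionRing.injective _ _)).mpr hv)]
  have hv0 : v.totalDegree = 0 := by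
    have hunit : IsUnit v := huv ⟨C c, by rw [huc, mul_comm]⟩ dvd_rfl
    simpa using totalDegree_le_of_dvd_of_isDomain hunit.dvd one_ne_zero
  have hu0 : u.totalDegree = 0 := by
    have := totalDegree_mul (C c) v
    rw [← huc, totalDegree_C, hv0] at this
    omega
  simp [hu0, hv0] at hdeg

end Field

end MvPolynomial

open Polynomial in
theorem degree_multiplicative_of_uni_multivariate_composition_general
    {K : Type*} [Field K] {n : ℕ}
    (fn fd hn hd : MvPolynomial (Fin n) K)
    (hfd : fd ≠ 0) (hhd : hd ≠ 0)
    (hcopf : ∀ d : MvPolynomial (Fin n) K, d ∣ fn → d ∣ fd → IsUnit d)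
    (hcoph : ∀ d : MvPolynomial (Fin n) K, d ∣ hn → d ∣ hd → IsUnit d)
    (g : RatFunc K)
    (hh : 0 < max hn.totalDegree hd.totalDegree)
    (hcomp :
      (algebraMap (MvPolynomial (Fin n) K) (FractionRing (MvPolynomial (Fin n) K)) fn) /
        (algebraMap (MvPolynomial (Fin n) K) (FractionRing (MvPolynomial (Fin n) K)) fd) =
      ratEval g
        ((algebraMap (MvPolynomial (Fin n) K) (FractionRing (MvPolynomial (Fin n) K)) hn) /
          (algebraMap (MvPolynomial (Fin n) K) (FractionRing (MvPolynomial (Fin n) K)) hd))) :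
    max fn.totalDegree fd.totalDegree =
      max g.num.natDegree g.denom.natDegree * max hn.totalDegree hd.totalDegree := by
  set φ := algebraMap (MvPolynomial (Fin n) K) (FractionRing (MvPolynomial (Fin n) K))
  set m := max g.num.natDegree g.denom.natDegree
  set P := MvPolynomial.aeval ![hn, hd] (g.num.homogenize m)
  set Q := MvPolynomial.aeval ![hn, hd] (g.denom.homogenize m)
  have hφinj : Function.Injective φ := IsFractionRing.injective _ _
  have hφhd : φ hd ≠ 0 := (map_ne_zero_iff φ hφinj).mpr hhd
  have hφQ : φ Q ≠ 0 := by
    rw [algebraMap_aeval_homogenize (le_max_right _ _) hn hhd]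
    refine mul_ne_zero (fun h0 => g.denom_ne_zero ?_) (pow_ne_zero _ hφhd)
    exact transcendental_iff.mp (transcendental_div_of_isRelPrime hcoph hhd hh) _ h0
  have hcross : fn * Q = fd * P := by
    have hPQ : φ fn / φ fd = φ P / φ Q := by
      rw [hcomp, ratEval, algebraMap_aeval_homogenize (le_max_left _ _) hn hhd,
        algebraMap_aeval_homogenize (le_max_right _ _) hn hhd,
        mul_div_mul_right _ _ (pow_ne_zero m hφhd)]
    rw [div_eq_div_iff ((map_ne_zero_iff φ hφinj).mpr hfd) hφQ] at hPQ
    exact hφinj (by rw [map_mul, map_mul, hPQ, mul_comm])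
  obtain ⟨hfnP, hfdQ⟩ := IsRelPrime.associated_of_mul_eq_mul hcopf
    (isRelPrime_aeval_homogenize g.isCoprime_num_denom hcoph) hcross
  rw [hfnP.totalDegree_eq, hfdQ.totalDegree_eq]
  exact max_totalDegree_aeval_homogenize g.isCoprime_num_denom hn hd

/-- For non-constant `g ∈ K(y)` and `h ∈ K(x₁,…,xₙ)`, the degree of
`f = g(h)` is `deg g · deg h`, where the degree of a rational function in lowest
terms `p/q` is `max(deg p, deg q)` (total degree). -/
theorem degree_multiplicative_of_uni_multivariate_composition
    {K : Type*} [Field K] {n : ℕ}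
    (fn fd hn hd : MvPolynomial (Fin n) K)
    (hfd : fd ≠ 0) (hhd : hd ≠ 0)
    (hcopf : ∀ d : MvPolynomial (Fin n) K, d ∣ fn → d ∣ fd → IsUnit d)
    (hcoph : ∀ d : MvPolynomial (Fin n) K, d ∣ hn → d ∣ hd → IsUnit d)
    (g : RatFunc K)
    (hg : 0 < max g.num.natDegree g.denom.natDegree)
    (hh : 0 < max hn.totalDegree hd.totalDegree)
    (hcomp :
      (algebraMap (MvPolynomial (Fin n) K) (FractionRing (MvPolynomial (Fin n) K)) fn) /
        (algebraMap (MvPolynomial (Fin n) K) (FractionRing (MvPolynomial (Fin n) K)) fd) =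
      ratEval g
        ((algebraMap (MvPolynomial (Fin n) K) (FractionRing (MvPolynomial (Fin n) K)) hn) /
          (algebraMap (MvPolynomial (Fin n) K) (FractionRing (MvPolynomial (Fin n) K)) hd))) :
    max fn.totalDegree fd.totalDegree =
      max g.num.natDegree g.denom.natDegree * max hn.totalDegree hd.totalDegree :=
  degree_multiplicative_of_uni_multivariate_composition_general fn fd hn hd hfd hhd hcopf hcoph g hh
    hcomp
end

section
/- Let g = g_n/g_d with g_n = a_u y^u + ⋯ + a₀, g_d = b_v y^v + ⋯ + b₀, gcd(g_n,g_d) = 1, and h = h_n/h_d ∈ K(x₁,…,xₙ) with gcd(h_n,h_d) = 1. Define f_n = (a_u h_n^u + ⋯ + a₀ h_d^u)·h_d^{max(v−u,0)} and f_d = (b_v h_n^v + ⋯ + b₀ h_d^v)·h_d^{max(u−v,0)}. Then gcd(f_n, f_d) = 1, i.e. this expression of f = g(h) as a fraction is already in lowest terms. -/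
open MvPolynomial Finset

lemma homog_eval {K : Type*} [Field K] {n : ℕ} (hn hd : MvPolynomial (Fin n) K) (hhd : hd ≠ 0)
    (q : Polynomial K) (m : ℕ) (hm : q.natDegree ≤ m) :
    algebraMap (MvPolynomial (Fin n) K) (FractionRing (MvPolynomial (Fin n) K))
      (∑ i ∈ range (m + 1), C (q.coeff i) * hn ^ i * hd ^ (m - i))
    = (algebraMap (MvPolynomial (Fin n) K) (FractionRing (MvPolynomial (Fin n) K)) hd) ^ m *
      Polynomial.eval₂
        ((algebraMap (MvPolynomial (Fin n) K) (FractionRing (MvPolynomial (Fin n) K))).comp C)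
        (algebraMap (MvPolynomial (Fin n) K) (FractionRing (MvPolynomial (Fin n) K)) hn /
          algebraMap (MvPolynomial (Fin n) K) (FractionRing (MvPolynomial (Fin n) K)) hd) q := by
  set φ := algebraMap (MvPolynomial (Fin n) K) (FractionRing (MvPolynomial (Fin n) K)) with hφ
  have hφd : φ hd ≠ 0 := (map_ne_zero_iff φ (IsFractionRing.injective _ _)).mpr hhd
  rw [Polynomial.eval₂_eq_sum_range' _ (Nat.lt_succ_of_le hm), map_sum, Finset.mul_sum]
  refine Finset.sum_congr rfl fun i hi => ?_
  have hi' : i ≤ m := Nat.lt_succ_iff.mp (Finset.mem_range.mp hi)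
  have hpow : φ hd ^ m = φ hd ^ (m - i) * φ hd ^ i := by
    rw [← pow_add]; congr 1; omega
  rw [map_mul, map_mul, map_pow, map_pow, RingHom.comp_apply, hpow, div_pow]
  field_simp

lemma prime_dvd_lead {K : Type*} [Field K] {n : ℕ} (hn hd : MvPolynomial (Fin n) K)
    {p : MvPolynomial (Fin n) K} (hp : Prime p) (hpd : p ∣ hd)
    (q : Polynomial K) (hq : q ≠ 0)
    (hdvd : p ∣ ∑ i ∈ range (q.natDegree + 1), C (q.coeff i) * hn ^ i * hd ^ (q.natDegree - i)) :
    p ∣ hn := by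
  set m := q.natDegree with hm
  rw [Finset.sum_range_succ, Nat.sub_self, pow_zero, mul_one] at hdvd
  have h1 : p ∣ ∑ i ∈ range m, C (q.coeff i) * hn ^ i * hd ^ (m - i) :=
    Finset.dvd_sum fun i hi => by
      have hne : m - i ≠ 0 := by have := Finset.mem_range.mp hi; omega
      exact Dvd.dvd.mul_left (hpd.trans (dvd_pow_self hd hne)) _
  have h2 : p ∣ C (q.coeff m) * hn ^ m := (dvd_add_right h1).mp hdvd
  have hc : q.coeff m ≠ 0 := by
    rw [hm, ← Polynomial.leadingCoeff]; exact Polynomial.leadingCoeff_ne_zero.mpr hq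
  have hu : IsUnit (C (q.coeff m) : MvPolynomial (Fin n) K) := hc.isUnit.map C
  have h3 : p ∣ hn ^ m := hu.dvd_mul_left.mp h2
  rcases Nat.eq_zero_or_pos m with h | h
  · exact absurd (isUnit_of_dvd_one (by rwa [h, pow_zero] at h3)) hp.not_unit
  · exact hp.dvd_of_dvd_pow h3

/-- If `g = gn/gd ∈ K(y)` with `gcd(gn,gd) = 1` (with `u = deg gn`,
`v = deg gd`) and `h = hn/hd ∈ K(x₁,…,xₙ)` is non-constant with `gcd(hn,hd) = 1`, then
`fn = (Σᵢ aᵢ hn^i hd^{u−i})·hd^{max(v−u,0)}` and `fd = (Σᵢ bᵢ hn^i hd^{v−i})·hd^{max(u−v,0)}`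
satisfy `gcd(fn,fd) = 1`; i.e. this expression of `f = g(h)` is in lowest terms. -/
theorem composition_fraction_in_lowest_terms
    {K : Type*} [Field K] {n : ℕ}
    (gn gd : Polynomial K) (hgn : gn ≠ 0) (hgd : gd ≠ 0)
    (hcopg : IsCoprime gn gd)
    (hn hd : MvPolynomial (Fin n) K) (hhd : hd ≠ 0)
    (hcoph : ∀ d : MvPolynomial (Fin n) K, d ∣ hn → d ∣ hd → IsUnit d)
    (hh : 0 < max hn.totalDegree hd.totalDegree)
    (u v : ℕ) (hu : u = gn.natDegree) (hv : v = gd.natDegree)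
    (fn fd : MvPolynomial (Fin n) K)
    (hfn : fn = (∑ i ∈ range (u + 1), C (gn.coeff i) * hn ^ i * hd ^ (u - i)) * hd ^ (v - u))
    (hfd : fd = (∑ i ∈ range (v + 1), C (gd.coeff i) * hn ^ i * hd ^ (v - i)) * hd ^ (u - v)) :
    ∀ d : MvPolynomial (Fin n) K, d ∣ fn → d ∣ fd → IsUnit d := by
  obtain ⟨s, t, hst⟩ := hcopg
  set a := s.natDegree with ha
  set b := t.natDegree with hb
  set N := a + u + b + v with hN
  have key : (∑ i ∈ range (a + 1), C (s.coeff i) * hn ^ i * hd ^ (a - i)) * hd ^ (b + v - (v - u)) * fn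
      + (∑ i ∈ range (b + 1), C (t.coeff i) * hn ^ i * hd ^ (b - i)) * hd ^ (a + u - (u - v)) * fd
      = hd ^ N := by
    apply IsFractionRing.injective (MvPolynomial (Fin n) K) (FractionRing (MvPolynomial (Fin n) K))
    rw [hfn, hfd]
    simp only [RingHom.map_add, RingHom.map_mul, RingHom.map_pow]
    rw [homog_eval hn hd hhd s a le_rfl, homog_eval hn hd hhd gn u hu.ge,
      homog_eval hn hd hhd t b le_rfl, homog_eval hn hd hhd gd v hv.ge]
    set φ := algebraMap (MvPolynomial (Fin n) K) (FractionRing (MvPolynomial (Fin n) K)) with hφ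
    set r := φ hn / φ hd with hr
    set f := φ.comp (C : K →+* MvPolynomial (Fin n) K) with hf
    have hE : Polynomial.eval₂ f r s * Polynomial.eval₂ f r gn
        + Polynomial.eval₂ f r t * Polynomial.eval₂ f r gd = 1 := by
      rw [← Polynomial.eval₂_mul, ← Polynomial.eval₂_mul, ← Polynomial.eval₂_add, hst,
        Polynomial.eval₂_one]
    have e1 : φ hd ^ a * φ hd ^ (b + v - (v - u)) * φ hd ^ u * φ hd ^ (v - u) = φ hd ^ N := by
      rw [← pow_add, ← pow_add, ← pow_add]; congr 1; omega
    have e2 : φ hd ^ b * φ hd ^ (a + u - (u - v)) * φ hd ^ v * φ hd ^ (u - v) = φ hd ^ N := by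
      rw [← pow_add, ← pow_add, ← pow_add]; congr 1; omega
    linear_combination (Polynomial.eval₂ f r s * Polynomial.eval₂ f r gn) * e1
      + (Polynomial.eval₂ f r t * Polynomial.eval₂ f r gd) * e2 + (φ hd) ^ N * hE
  intro d hdfn hdfd
  by_contra hnu
  have hdvd : d ∣ hd ^ N := key ▸ dvd_add (hdfn.mul_left _) (hdfd.mul_left _)
  have hd0 : d ≠ 0 := by
    rintro rfl
    exact pow_ne_zero N hhd (zero_dvd_iff.mp hdvd)
  obtain ⟨p, hpirr, hpd⟩ := WfDvdMonoid.exists_irreducible_factor hnu hd0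
  have hp : Prime p := hpirr.prime
  have hphd : p ∣ hd := hp.dvd_of_dvd_pow (hpd.trans hdvd)
  have hphn : p ∣ hn := by
    rcases le_total u v with h | h
    · have h0 : u - v = 0 := by omega
      rw [hfd, h0, pow_zero, mul_one] at hdfd
      exact prime_dvd_lead hn hd hp hphd gd hgd (by rw [← hv]; exact hpd.trans hdfd)
    · have h0 : v - u = 0 := by omega
      rw [hfn, h0, pow_zero, mul_one] at hdfn
      exact prime_dvd_lead hn hd hp hphd gn hgn (by rw [← hu]; exact hpd.trans hdfn)
  exact hp.not_unit (hcoph p hphn hphd)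
end

section
/- Let f ∈ K(x₁,…,xₙ) be non-constant. Two uni-multivariate decompositions (g,h) and (g',h') of f (so f = g(h) = g'(h') with g,g' ∈ K(y), h,h' ∈ K(x₁,…,xₙ)) generate the same intermediate field, K(h) = K(h'), if and only if there exists a rational function l ∈ K(y) of degree 1 (a composition unit) with h = l(h'). -/
/-!
Since `f = g'(h')` is non-constant, so is `h'`, and a non-constant element of
`K(x₁,…,xₙ)` is transcendental over `K`: an algebraic one lies in the integrally closed
ring `K[x₁,…,xₙ]`, where it is a unit, hence a constant. Thus `l ↦ l(h')` is an isomorphism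
`K(y) ≃ K(h')` carrying `K(l)` onto `K(l(h'))`. Either side of the equivalence puts `h` in
`K(h')`, i.e. `h = l(h')` for some `l`, and then `K(h) = K(h')` iff
`K(l) = K(y)`, i.e. iff `[K(y) : K(l)] = max (deg l.num) (deg l.denom)` equals `1`.
-/

open MvPolynomial

open IntermediateField

theorem MvPolynomial.exists_eq_C_of_isIntegral {σ K : Type*} [Field K] {p : MvPolynomial σ K}
    (hp : IsIntegral K p) : ∃ c, p = C c := by
  rcases eq_or_ne p 0 with rfl | hp0
  · exact ⟨0, C_0.symm⟩
  · obtain ⟨c, -, hc⟩ := isUnit_iff_eq_C_of_isReduced.mp (hp.isUnit hp0)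
    exact ⟨c, hc⟩

theorem MvPolynomial.transcendental_of_notMem_range {σ K : Type*} [Field K]
    {x : FractionRing (MvPolynomial σ K)}
    (hx : x ∉ Set.range (algebraMap K (FractionRing (MvPolynomial σ K)))) :
    Transcendental K x := fun halg ↦ by
  obtain ⟨p, rfl⟩ := IsIntegrallyClosed.isIntegral_iff.mp
    (halg.isIntegral.tower_top (A := MvPolynomial σ K))
  obtain ⟨c, rfl⟩ := exists_eq_C_of_isIntegral ((isIntegral_algebraMap_iff
    (IsFractionRing.injective (MvPolynomial σ K) _)).mp halg.isIntegral)
  exact hx ⟨c, (IsScalarTower.algebraMap_apply K (MvPolynomial σ K) _ c).symm⟩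

section ratEval

variable {K L : Type*} [Field K] [Field L] [Algebra K L]

theorem ratEval_algebraMap (g : RatFunc K) (c : K) :
    ratEval g (algebraMap K L c) = algebraMap K L (ratEval g c) := by
  simp only [ratEval, Polynomial.aeval_algebraMap_apply, map_div₀]

theorem notMem_range_of_ratEval_notMem_range {g : RatFunc K} {t : L}
    (h : ratEval g t ∉ Set.range (algebraMap K L)) : t ∉ Set.range (algebraMap K L) := by
  rintro ⟨c, rfl⟩
  exact h ⟨_, (ratEval_algebraMap g c).symm⟩

@[simp]
theorem ratEval_X (t : L) : ratEval (RatFunc.X : RatFunc K) t = t := by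
  simp [ratEval]

variable {t : L} (ht : Transcendental K t)
include ht

theorem ratEval_eq_algEquivOfTranscendental (l : RatFunc K) :
    ratEval l t = RatFunc.algEquivOfTranscendental t ht l := by
  rw [RatFunc.algEquivOfTranscendental_apply, ratEval]

theorem exists_ratEval_eq_of_mem_adjoin {x : L} (hx : x ∈ K⟮t⟯) :
    ∃ l : RatFunc K, x = ratEval l t :=
  ⟨(RatFunc.algEquivOfTranscendental t ht).symm ⟨x, hx⟩, by
    rw [ratEval_eq_algEquivOfTranscendental ht, AlgEquiv.apply_symm_apply]⟩

theorem adjoin_ratEval_eq_adjoin_iff (l : RatFunc K) :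
    K⟮ratEval l t⟯ = K⟮t⟯ ↔ max l.num.natDegree l.denom.natDegree = 1 := by
  set φ : RatFunc K →ₐ[K] L := K⟮t⟯.val.comp (RatFunc.algEquivOfTranscendental t ht).toAlgHom
  have hφ : ∀ u, φ u = ratEval u t := fun u ↦ (ratEval_eq_algEquivOfTranscendental ht u).symm
  have hX : K⟮t⟯ = K⟮RatFunc.X⟯.map φ := by
    rw [adjoin_map, Set.image_singleton, hφ, ratEval_X]
  rw [← RatFunc.finrank_eq_max_natDegree, finrank_eq_one_iff_eq_top, ← RatFunc.adjoin_X, hX,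
    ← hφ, ← Set.image_singleton, ← adjoin_map]
  exact (map_injective φ).eq_iff

end ratEval

theorem same_intermediate_field_iff_equivalent_decompositions_general
    {K : Type*} [Field K] {n : ℕ}
    (f h h' : FractionRing (MvPolynomial (Fin n) K))
    (hf : f ∉ Set.range (algebraMap K (FractionRing (MvPolynomial (Fin n) K))))
    (g' : RatFunc K)
    (hdec' : f = ratEval g' h') :
    IntermediateField.adjoin K {h} = IntermediateField.adjoin K {h'} ↔
      ∃ l : RatFunc K, max l.num.natDegree l.denom.natDegree = 1 ∧ h = ratEval l h' := by
  have ht' : Transcendental K h' :=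
    transcendental_of_notMem_range (notMem_range_of_ratEval_notMem_range (hdec' ▸ hf))
  constructor
  · intro heq
    obtain ⟨l, rfl⟩ := exists_ratEval_eq_of_mem_adjoin ht' (heq ▸ mem_adjoin_simple_self K h)
    exact ⟨l, (adjoin_ratEval_eq_adjoin_iff ht' l).mp heq, rfl⟩
  · rintro ⟨l, hl, rfl⟩
    exact (adjoin_ratEval_eq_adjoin_iff ht' l).mpr hl

/-- Two uni-multivariate decompositions `(g,h)` and `(g',h')` of a
non-constant `f ∈ K(x₁,…,xₙ)` generate the same intermediate field, `K(h) = K(h')`,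
iff there is a degree-1 rational function `l ∈ K(y)` (a composition unit) with
`h = l(h')`. -/
theorem same_intermediate_field_iff_equivalent_decompositions
    {K : Type*} [Field K] {n : ℕ}
    (f h h' : FractionRing (MvPolynomial (Fin n) K))
    (hf : f ∉ Set.range (algebraMap K (FractionRing (MvPolynomial (Fin n) K))))
    (g g' : RatFunc K)
    (hdec : f = ratEval g h) (hdec' : f = ratEval g' h') :
    IntermediateField.adjoin K {h} = IntermediateField.adjoin K {h'} ↔
      ∃ l : RatFunc K, max l.num.natDegree l.denom.natDegree = 1 ∧ h = ratEval l h' :=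
  same_intermediate_field_iff_equivalent_decompositions_general f h h' hf g' hdec'
end

section
/- Let f ∈ K(x₁,…,xₙ) be a Lüroth generator, F = K(f), and suppose p ∈ F is a non-constant polynomial. Write f = f_n/f_d in lowest terms with homogeneous decompositions f_n = f_n^{(s)} + ⋯ + f_n^{(0)} and f_d = f_d^{(s)} + ⋯ + f_d^{(0)} (s = deg f), and assume either f_d^{(s)} = 0 or f_n^{(s)}/f_d^{(s)} ∉ K. If f_d^{(s)} = 0, then f itself is a polynomial. -/
/-!
Write `g = a / b` and clear denominators: with `m = max (deg a) (deg b)`, the identity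
`p = a(f) / b(f)` becomes `p * B = A`, where `A` and `B` are the degree-`m` homogenizations of
`a` and `b` evaluated at `(fn, fd)`. The hypothesis on the top component gives
`deg fd < deg fn`, so in `A` and `B` the term of largest `fn`-exponent dominates the total
degree; as `p` is non-constant this forces `deg b < deg a = m`. Then `fd` divides `B` and every
term of `A` except `lc(a) * fn ^ m`, so `fd ∣ fn ^ m`, and coprimality makes `fd` a unit.
-/

open MvPolynomial

theorem Nat.strictMonoOn_mul_add_sub_mul {a b n : ℕ} (hab : b < a) :
    StrictMonoOn (fun i => i * a + (n - i) * b) (Set.Iic n) := by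
  intro i _ j hjn hij
  obtain ⟨k, rfl⟩ := Nat.exists_eq_add_of_lt hij
  obtain ⟨l, rfl⟩ := Nat.exists_eq_add_of_le (Set.mem_Iic.mp hjn)
  simp only [show i + k + 1 + l - i = k + 1 + l by omega, Nat.add_sub_cancel_left]
  nlinarith

namespace MvPolynomial

variable {σ : Type*}

theorem homogeneousComponent_totalDegree_ne_zero_s14 {R : Type*} [CommSemiring R]
    {φ : MvPolynomial σ R} (hφ : φ ≠ 0) : homogeneousComponent φ.totalDegree φ ≠ 0 := by
  obtain ⟨d, hd, hdeg⟩ := φ.support.exists_mem_eq_sup (support_nonempty.mpr hφ)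
    fun s => s.sum fun _ e => e
  rw [Ne, ← support_eq_empty, support_homogeneousComponent, Finset.filter_eq_empty_iff]
  push Not
  exact ⟨d, hd, by rw [Finsupp.degree_apply, totalDegree, hdeg, Finsupp.sum]⟩

theorem totalDegree_lt_of_homogeneousComponent_max_eq_zero {R : Type*} [CommSemiring R]
    {p q : MvPolynomial σ R} (hq : q ≠ 0)
    (h : homogeneousComponent (max p.totalDegree q.totalDegree) q = 0) :
    q.totalDegree < p.totalDegree := by
  by_contra! hle
  rw [max_eq_right hle] at h
  exact homogeneousComponent_totalDegree_ne_zero_s14 hq h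

theorem totalDegree_C_mul_pow_mul_pow_le {R : Type*} [CommSemiring R] (c : R)
    (p q : MvPolynomial σ R) (i j : ℕ) :
    (C c * p ^ i * q ^ j).totalDegree ≤ i * p.totalDegree + j * q.totalDegree := by
  refine (totalDegree_mul _ _).trans (add_le_add ((totalDegree_mul _ _).trans ?_)
    (totalDegree_pow q j))
  rw [totalDegree_C, zero_add]
  exact totalDegree_pow p i

variable {R : Type*} [CommRing R] [IsDomain R]

theorem totalDegree_pow_of_isDomain {p : MvPolynomial σ R} (hp : p ≠ 0) (k : ℕ) :
    (p ^ k).totalDegree = k * p.totalDegree := by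
  induction k with
  | zero => simp
  | succ k ih => rw [pow_succ, totalDegree_mul_of_isDomain (pow_ne_zero k hp) hp, ih, Nat.succ_mul]

theorem totalDegree_C_mul_pow_mul_pow {c : R} (hc : c ≠ 0) {p q : MvPolynomial σ R}
    (hp : p ≠ 0) (hq : q ≠ 0) (i j : ℕ) :
    (C c * p ^ i * q ^ j).totalDegree = i * p.totalDegree + j * q.totalDegree := by
  rw [totalDegree_mul_of_isDomain (by simp [hc, hp]) (pow_ne_zero j hq),
    totalDegree_mul_of_isDomain (C_ne_zero.mpr hc) (pow_ne_zero i hp), totalDegree_C,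
    totalDegree_pow_of_isDomain hp, totalDegree_pow_of_isDomain hq, zero_add]

end MvPolynomial

namespace Polynomial

open Finset

theorem aeval_homogenize_eq_sum_range {R A : Type*} [CommSemiring R] [CommSemiring A]
    [Algebra R A] {p : R[X]} {n N : ℕ} (hN : p.natDegree < N)
    (hNn : N ≤ n + 1) (g : Fin 2 → A) :
    MvPolynomial.aeval g (p.homogenize n) =
      ∑ i ∈ range N, algebraMap R A (p.coeff i) * g 0 ^ i * g 1 ^ (n - i) := by
  conv_lhs => rw [p.as_sum_range_C_mul_X_pow' hN]
  simp only [homogenize_finsetSum, homogenize_C_mul, map_sum]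
  refine sum_congr rfl fun i hi => ?_
  rw [homogenize_X_pow (by grind), map_mul, map_mul, map_pow, map_pow, MvPolynomial.aeval_C,
    MvPolynomial.aeval_X, MvPolynomial.aeval_X, mul_assoc]

theorem dvd_aeval_homogenize_sub_s14 {R A : Type*} [CommSemiring R] [CommRing A] [Algebra R A]
    {p : R[X]} {n : ℕ} (hn : p.natDegree ≤ n) (g : Fin 2 → A) :
    g 1 ∣ MvPolynomial.aeval g (p.homogenize n) - algebraMap R A (p.coeff n) * g 0 ^ n := by
  rw [aeval_homogenize_eq_sum_range (Nat.lt_succ_of_le hn) le_rfl, sum_range_succ, Nat.sub_self,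
    pow_zero, mul_one, add_sub_cancel_right]
  refine dvd_sum fun i hi => Dvd.dvd.mul_left (dvd_pow_self _ ?_) _
  grind

theorem aeval_homogenize_eq_aeval_div_mul_pow {K L : Type*} [CommSemiring K] [Field L]
    [Algebra K L] {p : K[X]} {n : ℕ} (hn : p.natDegree ≤ n) {g : Fin 2 → L} (hg : g 1 ≠ 0) :
    MvPolynomial.aeval g (p.homogenize n) = aeval (g 0 / g 1) p * g 1 ^ n := by
  rw [aeval_homogenize_eq_sum_range (Nat.lt_succ_of_le hn) le_rfl,
    aeval_eq_sum_range' (Nat.lt_succ_of_le hn), sum_mul]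
  refine sum_congr rfl fun i hi => ?_
  rw [Algebra.smul_def, div_pow, pow_sub₀ _ hg (by grind)]
  field_simp

theorem totalDegree_aeval_homogenize {σ K : Type*} [Field K] {x y : MvPolynomial σ K}
    (hx : x ≠ 0) (hy : y ≠ 0) (hxy : y.totalDegree < x.totalDegree) {p : K[X]} (hp : p ≠ 0)
    {n : ℕ} (hn : p.natDegree ≤ n) :
    (MvPolynomial.aeval ![x, y] (p.homogenize n)).totalDegree =
      p.natDegree * x.totalDegree + (n - p.natDegree) * y.totalDegree := by
  have hlower {i j : ℕ} (hij : i < j) (hjn : j ≤ n) :=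
    Nat.strictMonoOn_mul_add_sub_mul (n := n) hxy (hij.le.trans hjn) hjn hij
  set d := p.natDegree
  have hlead : p.coeff d ≠ 0 := leadingCoeff_ne_zero.mpr hp
  have htop := MvPolynomial.totalDegree_C_mul_pow_mul_pow hlead hx hy d (n - d)
  rw [aeval_homogenize_eq_sum_range (Nat.lt_succ_self d) (by omega), sum_range_succ]
  simp only [Matrix.cons_val_zero, Matrix.cons_val_one, MvPolynomial.algebraMap_eq]
  rcases Nat.eq_zero_or_pos d with hd | hd
  · rw [hd, sum_range_zero, zero_add, ← hd, htop]
  rw [MvPolynomial.totalDegree_add_eq_right_of_totalDegree_lt, htop]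
  rw [htop]
  refine (MvPolynomial.totalDegree_finsetSum _ _).trans_lt
    ((Finset.sup_lt_iff ((Nat.zero_le _).trans_lt (hlower hd hn))).mpr fun i hi => ?_)
  exact (MvPolynomial.totalDegree_C_mul_pow_mul_pow_le _ _ _ _ _).trans_lt
    (hlower (mem_range.mp hi) hn)

theorem natDegree_lt_of_mul_aeval_homogenize_eq {σ K : Type*} [Field K]
    {x y p : MvPolynomial σ K} (hx : x ≠ 0) (hy : y ≠ 0) (hxy : y.totalDegree < x.totalDegree)
    (hp : 0 < p.totalDegree) {u v : K[X]} {n : ℕ} (hun : u.natDegree ≤ n)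
    (hvn : v.natDegree ≤ n) (hv : MvPolynomial.aeval ![x, y] (v.homogenize n) ≠ 0)
    (h : p * MvPolynomial.aeval ![x, y] (v.homogenize n) =
      MvPolynomial.aeval ![x, y] (u.homogenize n)) :
    v.natDegree < u.natDegree := by
  have hp0 : p ≠ 0 := by rintro rfl; simp at hp
  have hu0 : u ≠ 0 := by
    rintro rfl
    rw [homogenize_zero, map_zero] at h
    exact mul_ne_zero hp0 hv h
  have hv0 : v ≠ 0 := by rintro rfl; simp at hv
  have hdeg := congrArg MvPolynomial.totalDegree h
  rw [MvPolynomial.totalDegree_mul_of_isDomain hp0 hv,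
    totalDegree_aeval_homogenize hx hy hxy hv0 hvn,
    totalDegree_aeval_homogenize hx hy hxy hu0 hun] at hdeg
  exact ((Nat.strictMonoOn_mul_add_sub_mul hxy).lt_iff_lt hvn hun).mp (by omega)

theorem isUnit_of_mul_aeval_homogenize_eq {K R : Type*} [Field K] [CommRing R] [Algebra K R]
    [DecompositionMonoid R] {x y p : R} (hxy : IsRelPrime x y) {u v : K[X]}
    (hvu : v.natDegree < u.natDegree)
    (h : p * MvPolynomial.aeval ![x, y] (v.homogenize u.natDegree) =
      MvPolynomial.aeval ![x, y] (u.homogenize u.natDegree)) :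
    IsUnit y := by
  have hv : y ∣ MvPolynomial.aeval ![x, y] (v.homogenize u.natDegree) := by
    simpa [coeff_eq_zero_of_natDegree_lt hvu] using dvd_aeval_homogenize_sub_s14 hvu.le ![x, y]
  have hu : y ∣ MvPolynomial.aeval ![x, y] (u.homogenize u.natDegree) -
      algebraMap K R u.leadingCoeff * x ^ u.natDegree := by
    simpa using dvd_aeval_homogenize_sub_s14 le_rfl ![x, y]
  have hlead : y ∣ algebraMap K R u.leadingCoeff * x ^ u.natDegree := by
    have := dvd_sub (hv.mul_left p) hu
    rwa [h, sub_sub_cancel] at this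
  have hunit : IsUnit (algebraMap K R u.leadingCoeff) :=
    (isUnit_iff_ne_zero.mpr (leadingCoeff_ne_zero.mpr (ne_zero_of_natDegree_gt hvu))).map _
  exact hxy.pow_left (hunit.dvd_mul_left.mp hlead) dvd_rfl

section FractionRing

variable {K R L : Type*} [Field K] [CommRing R] [IsDomain R] [Field L] [Algebra K R]
  [Algebra K L] [Algebra R L] [IsScalarTower K R L] [IsFractionRing R L]

theorem algebraMap_aeval_homogenize {p : K[X]} {n : ℕ} (hn : p.natDegree ≤ n) (x : R) {y : R}
    (hy : y ≠ 0) :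
    algebraMap R L (MvPolynomial.aeval ![x, y] (p.homogenize n)) =
      aeval (algebraMap R L x / algebraMap R L y) p * algebraMap R L y ^ n := by
  rw [← IsScalarTower.coe_toAlgHom' K R L, MvPolynomial.comp_aeval_apply,
    aeval_homogenize_eq_aeval_div_mul_pow hn]
  · simp
  · simpa using (map_ne_zero_iff _ (IsFractionRing.injective R L)).mpr hy

theorem mul_aeval_homogenize_denom_eq_num {p x y : R} (hp : p ≠ 0) (hy : y ≠ 0)
    {g : RatFunc K} (h : algebraMap R L p = ratEval g (algebraMap R L x / algebraMap R L y))
    {n : ℕ} (hnum : g.num.natDegree ≤ n) (hdenom : g.denom.natDegree ≤ n) :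
    MvPolynomial.aeval ![x, y] (g.denom.homogenize n) ≠ 0 ∧
      p * MvPolynomial.aeval ![x, y] (g.denom.homogenize n) =
        MvPolynomial.aeval ![x, y] (g.num.homogenize n) := by
  have hinj := IsFractionRing.injective R L
  have hyL : algebraMap R L y ≠ 0 := (map_ne_zero_iff _ hinj).mpr hy
  have hden : aeval (algebraMap R L x / algebraMap R L y) g.denom ≠ 0 := by
    intro h0
    rw [ratEval, h0, div_zero] at h
    exact hp (hinj (h.trans (map_zero _).symm))
  rw [ratEval, eq_div_iff hden] at h
  refine ⟨fun h0 => ?_, hinj ?_⟩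
  · have := congrArg (algebraMap R L) h0
    rw [algebraMap_aeval_homogenize hdenom x hy, map_zero] at this
    exact mul_ne_zero hden (pow_ne_zero n hyL) this
  · rw [map_mul, algebraMap_aeval_homogenize hdenom x hy, algebraMap_aeval_homogenize hnum x hy,
      ← h]
    ring

end FractionRing

end Polynomial

/-- Let `f = fn/fd` be in lowest terms, `s = deg f`, and suppose the
degree-`s` homogeneous component of `fd` vanishes. If some non-constant polynomial
`p` belongs to `K(f)` (that is, `p = g(f)` for some `g ∈ K(y)`), then `f` itself is
a polynomial. -/
theorem generator_is_polynomial_of_top_denominator_component_zero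
    {K : Type*} [Field K] {n : ℕ}
    (fn fd : MvPolynomial (Fin n) K) (hfd : fd ≠ 0)
    (hcopf : ∀ d : MvPolynomial (Fin n) K, d ∣ fn → d ∣ fd → IsUnit d)
    (hs : homogeneousComponent (max fn.totalDegree fd.totalDegree) fd = 0)
    (p : MvPolynomial (Fin n) K) (hp : 0 < p.totalDegree)
    (g : RatFunc K)
    (hpf : algebraMap (MvPolynomial (Fin n) K) (FractionRing (MvPolynomial (Fin n) K)) p =
      ratEval g
        ((algebraMap (MvPolynomial (Fin n) K) (FractionRing (MvPolynomial (Fin n) K)) fn) /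
          (algebraMap (MvPolynomial (Fin n) K) (FractionRing (MvPolynomial (Fin n) K)) fd))) :
    ∃ q : MvPolynomial (Fin n) K,
      (algebraMap (MvPolynomial (Fin n) K) (FractionRing (MvPolynomial (Fin n) K)) fn) /
        (algebraMap (MvPolynomial (Fin n) K) (FractionRing (MvPolynomial (Fin n) K)) fd) =
      algebraMap (MvPolynomial (Fin n) K) (FractionRing (MvPolynomial (Fin n) K)) q := by
  have hdeg : fd.totalDegree < fn.totalDegree :=
    totalDegree_lt_of_homogeneousComponent_max_eq_zero hfd hs
  have hfn : fn ≠ 0 := by rintro rfl; simp at hdeg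
  have hp0 : p ≠ 0 := by rintro rfl; simp at hp
  obtain ⟨hdenom, hclear⟩ := Polynomial.mul_aeval_homogenize_denom_eq_num hp0 hfd hpf
    (le_max_left g.num.natDegree g.denom.natDegree) (le_max_right _ _)
  have hlt : g.denom.natDegree < g.num.natDegree :=
    Polynomial.natDegree_lt_of_mul_aeval_homogenize_eq hfn hfd hdeg hp (le_max_left _ _)
      (le_max_right _ _) hdenom hclear
  rw [max_eq_left hlt.le] at hclear
  obtain ⟨v, hv⟩ :=
    (Polynomial.isUnit_of_mul_aeval_homogenize_eq (fun _ => hcopf _) hlt hclear).exists_right_inv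
  refine ⟨fn * v, ?_⟩
  rw [div_eq_iff ((map_ne_zero_iff _ (IsFractionRing.injective _ _)).mpr hfd), ← map_mul,
    mul_assoc, mul_comm v, hv, mul_one]
end

section
/- Let f = f_n/f_d ∈ K(x₁,…,xₙ) in lowest terms and fix an admissible monomial ordering >. Suppose K has sufficiently many elements (e.g. K infinite). Then there exist a Möbius unit u ∈ K(y) of degree 1 and degree-1 substitutions vᵢ = xᵢ + αᵢ such that the rational function f̄ = f̄_n/f̄_d := u ∘ f(v₁,…,vₙ), in lowest terms, satisfies: lm(f̄_n) > lm(f̄_d), f̄_n(0,…,0) = 0, and f̄_d(0,…,0) ≠ 0. -/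
/-!
A Möbius unit `(a y + b)/(c y + d)` sends `P/Q` to `(a P + b Q)/(c P + d Q)`, and an invertible
substitution of this kind preserves coprimality. If `lm fn ≼ lm fd`, the pair `(fd, fn - k fd)`,
with `k` chosen to cancel the leading term of `fd`, has a numerator with strictly larger leading
monomial; `fn - k fd ≠ 0` as `fn`, `fd` are coprime and `fd` is not constant. Translations
`xᵢ ↦ xᵢ + αᵢ` preserve leading monomials, so over an infinite field we may translate to make
the denominator nonzero at the origin, and then subtract from the numerator its value there.
-/

open MvPolynomial

/-- The multidegree (exponent of the leading monomial) of a multivariate polynomial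
with respect to a monomial order, valued in the ordered synonym type. -/
noncomputable def mdeg {σ K : Type*} [CommSemiring K] (m : MonomialOrder σ)
    (p : MvPolynomial σ K) : m.syn :=
  p.support.sup (fun d => m.toSyn d)

theorem mdeg_eq_toSyn_degree {σ K : Type*} [CommSemiring K] (m : MonomialOrder σ)
    (p : MvPolynomial σ K) : mdeg m p = m.toSyn (m.degree p) := by
  simp [mdeg, MonomialOrder.degree]

namespace MvPolynomial

variable {σ R : Type*} [CommRing R]

noncomputable def translation (α : σ → R) : MvPolynomial σ R ≃ₐ[R] MvPolynomial σ R :=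
  AlgEquiv.ofAlgHom (aeval fun i => X i + C (α i)) (aeval fun i => X i + C (-α i))
    (algHom_ext fun i => by simp) (algHom_ext fun i => by simp)

theorem translation_apply (α : σ → R) (p : MvPolynomial σ R) :
    translation α p = aeval (fun i => X i + C (α i)) p := rfl

theorem translation_symm_apply (α : σ → R) (p : MvPolynomial σ R) :
    (translation α).symm p = translation (-α) p := rfl

@[simp]
theorem translation_C (α : σ → R) (a : R) : translation α (C a) = C a :=
  (translation α).commutes a

theorem eval_translation (x α : σ → R) (p : MvPolynomial σ R) :
    eval x (translation α p) = eval (x + α) p := by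
  induction p using MvPolynomial.induction_on with
  | C a => simp
  | add p q hp hq => simp_all
  | mul_X p i hp => simp_all [translation_apply]

theorem exists_eval_ne_zero {K : Type*} [Field K] [Infinite K] {p : MvPolynomial σ K}
    (hp : p ≠ 0) : ∃ x, eval x p ≠ 0 := by
  by_contra! h
  exact hp (funext fun x => by simp [h x])

end MvPolynomial

namespace MonomialOrder

section CommRing

variable {σ R : Type*} [CommRing R] (m : MonomialOrder σ)

theorem degree_translation_monomial_le (α : σ → R) (d : σ →₀ ℕ) (c : R) :
    m.degree (translation α (monomial d c)) ≼[m] d := by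
  nontriviality R
  rw [translation_apply, aeval_monomial, algebraMap_eq, Finsupp.prod]
  calc m.toSyn (m.degree (C c * ∏ i ∈ d.support, (X i + C (α i)) ^ d i))
      ≤ m.toSyn (m.degree (C c : MvPolynomial σ R) +
          ∑ i ∈ d.support, m.degree ((X i + C (α i)) ^ d i)) :=
        m.degree_mul_le.trans (by simpa using m.degree_prod_le)
    _ ≤ m.toSyn (∑ i ∈ d.support, d i • Finsupp.single i 1) := by
        rw [m.degree_C, zero_add, map_sum, map_sum]
        exact Finset.sum_le_sum fun i _ => m.degree_pow_le _ |>.trans (by rw [m.degree_X_add_C])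
    _ = m.toSyn d := by
        simp only [Finsupp.smul_single_one]
        exact congrArg m.toSyn d.sum_single

theorem degree_translation_le (α : σ → R) (p : MvPolynomial σ R) :
    m.degree (translation α p) ≼[m] m.degree p := by
  classical
  conv_lhs => rw [p.as_sum, map_sum]
  exact m.degree_sum_le.trans (Finset.sup_le fun d hd =>
    (m.degree_translation_monomial_le α d _).trans (m.le_degree hd))

theorem degree_translation (α : σ → R) (p : MvPolynomial σ R) :
    m.degree (translation α p) = m.degree p := by
  refine m.toSyn.injective (le_antisymm (m.degree_translation_le α p) ?_)
  simpa [← translation_symm_apply] using m.degree_translation_le (-α) (translation α p)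

end CommRing

section Field

variable {σ K : Type*} [Field K] (m : MonomialOrder σ)

theorem degree_eq_zero_of_isUnit {p : MvPolynomial σ K} (hp : IsUnit p) : m.degree p = 0 :=
  m.degree_eq_zero_iff_totalDegree_eq_zero.mpr (isUnit_iff_totalDegree_of_isReduced.mp hp).2

theorem degree_sub_C_mul_lt {f g : MvPolynomial σ K} (hg : m.degree g ≠ 0)
    (hfg : m.degree f ≼[m] m.degree g) :
    m.degree (f - C (f.coeff (m.degree g) / m.leadingCoeff g) * g) ≺[m] m.degree g := by
  set r := f - C (f.coeff (m.degree g) / m.leadingCoeff g) * g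
  have hg0 : g ≠ 0 := by rintro rfl; exact hg m.degree_zero
  have hcoeff : r.coeff (m.degree g) = 0 := by
    simp [r, coeff_C_mul, leadingCoeff, div_mul_cancel₀ _ (m.coeff_degree_ne_zero_iff.mpr hg0)]
  have hle : m.degree r ≼[m] m.degree g :=
    m.degree_sub_le.trans (sup_le hfg (m.degree_mul_le.trans (by simp [m.degree_C])))
  refine lt_of_le_of_ne hle fun heq => ?_
  rcases eq_or_ne r 0 with hr | hr
  · exact hg (by rw [← m.toSyn.injective heq, hr, m.degree_zero])
  · exact m.coeff_degree_ne_zero_iff.mpr hr (m.toSyn.injective heq ▸ hcoeff)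

theorem exists_moebius_degree_lt {f g : MvPolynomial σ K} (hfg : IsRelPrime f g)
    (hnc : m.degree f ≠ 0 ∨ m.degree g ≠ 0) :
    ∃ a b c d : K, a * d - b * c ≠ 0 ∧
      IsRelPrime (C a * f + C b * g) (C c * f + C d * g) ∧ C c * f + C d * g ≠ 0 ∧
      m.degree (C c * f + C d * g) ≺[m] m.degree (C a * f + C b * g) := by
  by_cases hlt : m.degree g ≺[m] m.degree f
  · have hg : g ≠ 0 := by
      rintro rfl
      simp [m.degree_eq_zero_of_isUnit (isRelPrime_zero_right.mp hfg)] at hlt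
    exact ⟨1, 0, 0, 1, by simp, by simpa using hfg, by simpa using hg, by simpa using hlt⟩
  · rw [not_lt] at hlt
    have hg : m.degree g ≠ 0 := by
      intro hg
      rw [hg, map_zero, ← m.eq_zero_iff, m.toSyn_eq_zero_iff] at hlt
      exact hnc.elim (· hlt) (· hg)
    set k := f.coeff (m.degree g) / m.leadingCoeff g
    have hrel : IsRelPrime g (f - C k * g) := (IsRelPrime.sub_mul_right_left_iff.mpr hfg).symm
    have hr : f - C k * g ≠ 0 := fun h0 =>
      hg (m.degree_eq_zero_of_isUnit (isRelPrime_zero_right.mp (h0 ▸ hrel)))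
    have hg' : C 0 * f + C 1 * g = g := by simp
    have hr' : C 1 * f + C (-k) * g = f - C k * g := by simp [sub_eq_add_neg]
    refine ⟨0, 1, 1, -k, by simp, ?_, ?_, ?_⟩ <;> simp only [hg', hr']
    · exact hrel
    · exact hr
    · exact m.degree_sub_C_mul_lt hg hlt

end Field

end MonomialOrder

namespace RatFunc

variable {K : Type*} [Field K]

theorem associated_num_denom_div_of_isCoprime {p q : Polynomial K} (hpq : IsCoprime p q)
    (hq : q ≠ 0) :
    Associated (algebraMap _ (RatFunc K) p / algebraMap _ _ q).num p ∧
      Associated (algebraMap _ (RatFunc K) p / algebraMap _ _ q).denom q := by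
  set u := algebraMap _ (RatFunc K) p / algebraMap _ _ q
  have h : u.num * q = p * u.denom := (num_mul_eq_mul_denom_iff hq).mpr rfl
  exact ⟨associated_of_dvd_dvd (num_div_dvd p hq) (hpq.dvd_of_dvd_mul_right ⟨_, h⟩),
    associated_of_dvd_dvd (denom_div_dvd p q)
      (hpq.symm.dvd_of_dvd_mul_left ⟨_, by rw [← h, mul_comm]⟩)⟩

theorem ratEval_div {L : Type*} [Field L] [Algebra K L] {p q : Polynomial K} {x : L}
    (hx : Polynomial.aeval x q ≠ 0) :
    ratEval (algebraMap _ (RatFunc K) p / algebraMap _ _ q) x =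
      Polynomial.aeval x p / Polynomial.aeval x q := by
  set u := algebraMap _ (RatFunc K) p / algebraMap _ _ q
  have hq : q ≠ 0 := by rintro rfl; simp at hx
  have h : u.num * q = p * u.denom := (num_mul_eq_mul_denom_iff hq).mpr rfl
  replace h := congrArg (Polynomial.aeval x) h
  rw [map_mul, map_mul] at h
  have hden : Polynomial.aeval x u.denom ≠ 0 := by
    intro h0
    rw [h0, mul_zero, mul_eq_zero, or_iff_left hx] at h
    exact (Polynomial.aeval_ne_zero_of_isCoprime u.isCoprime_num_denom x).resolve_left
      (not_not.mpr h) h0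
  rw [ratEval, div_eq_div_iff hden hx, h]

noncomputable def moebius {K : Type*} [Field K] (a b c d : K) : RatFunc K :=
  algebraMap _ _ (Polynomial.C a * Polynomial.X + Polynomial.C b) /
    algebraMap _ _ (Polynomial.C c * Polynomial.X + Polynomial.C d)

section Moebius

variable {K : Type*} [Field K] {a b c d : K}

theorem _root_.Polynomial.isCoprime_linear_of_det_ne_zero (h : a * d - b * c ≠ 0) :
    IsCoprime (Polynomial.C a * Polynomial.X + Polynomial.C b)
      (Polynomial.C c * Polynomial.X + Polynomial.C d) := by
  refine ⟨Polynomial.C (-c / (a * d - b * c)), Polynomial.C (a / (a * d - b * c)), ?_⟩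
  have h₁ : -c / (a * d - b * c) * a + a / (a * d - b * c) * c = 0 := by ring
  have h₂ : -c / (a * d - b * c) * b + a / (a * d - b * c) * d = 1 := by
    rw [div_mul_eq_mul_div, div_mul_eq_mul_div, ← add_div, div_eq_one_iff_eq h]; ring
  calc _ = Polynomial.C (-c / (a * d - b * c) * a + a / (a * d - b * c) * c) * Polynomial.X +
        Polynomial.C (-c / (a * d - b * c) * b + a / (a * d - b * c) * d) := by
        simp only [map_add, map_mul]; ring
    _ = 1 := by rw [h₁, h₂]; simp

theorem max_natDegree_num_denom_moebius (h : a * d - b * c ≠ 0) :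
    max (moebius a b c d).num.natDegree (moebius a b c d).denom.natDegree = 1 := by
  have hcd : Polynomial.C c * Polynomial.X + Polynomial.C d ≠ 0 := by
    intro h0
    have hc : c = 0 := by simpa using congrArg (Polynomial.coeff · 1) h0
    have hd : d = 0 := by simpa using congrArg (Polynomial.coeff · 0) h0
    exact h (by simp [hc, hd])
  obtain ⟨hnum, hdenom⟩ := associated_num_denom_div_of_isCoprime
    (Polynomial.isCoprime_linear_of_det_ne_zero h) hcd
  rw [moebius,
    Polynomial.natDegree_eq_of_degree_eq (Polynomial.degree_eq_degree_of_associated hnum),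
    Polynomial.natDegree_eq_of_degree_eq (Polynomial.degree_eq_degree_of_associated hdenom)]
  rcases eq_or_ne a 0 with rfl | ha
  · have hc : c ≠ 0 := by rintro rfl; simp at h
    rw [Polynomial.natDegree_linear hc]
    exact max_eq_right Polynomial.natDegree_linear_le
  · rw [Polynomial.natDegree_linear ha]
    exact max_eq_left Polynomial.natDegree_linear_le

theorem ratEval_moebius {L : Type*} [Field L] [Algebra K L] {x y : L} (hy : y ≠ 0)
    (h : c • x + d • y ≠ 0) :
    ratEval (moebius a b c d) (x / y) = (a • x + b • y) / (c • x + d • y) := by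
  have key : ∀ a b : K,
      Polynomial.aeval (x / y) (Polynomial.C a * Polynomial.X + Polynomial.C b) =
        (a • x + b • y) / y := by
    intro a b
    simp only [map_add, map_mul, Polynomial.aeval_C, Polynomial.aeval_X, Algebra.smul_def]
    field_simp
  rw [moebius, ratEval_div (by rw [key]; exact div_ne_zero h hy), key, key,
    div_div_div_cancel_right₀ hy]

end Moebius

end RatFunc

/-- For a non-constant `f = fn/fd ∈ K(x₁,…,xₙ)` in lowest terms over an
infinite field and any admissible monomial ordering, there are a degree-1 unit
`u ∈ K(y)` and translations `vᵢ = xᵢ + αᵢ` such that `f̄ = u ∘ f(v₁,…,vₙ)`, written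
in lowest terms `f̄ = Fn/Fd`, satisfies `lm Fn > lm Fd`, `Fn(0,…,0) = 0` and
`Fd(0,…,0) ≠ 0`. -/
theorem normalize_rational_function
    {K : Type*} [Field K] [Infinite K] {n : ℕ} (m : MonomialOrder (Fin n))
    (fn fd : MvPolynomial (Fin n) K) (hfd : fd ≠ 0)
    (hcopf : ∀ d : MvPolynomial (Fin n) K, d ∣ fn → d ∣ fd → IsUnit d)
    (hnc : 0 < max fn.totalDegree fd.totalDegree) :
    ∃ (u : RatFunc K) (α : Fin n → K) (Fn Fd : MvPolynomial (Fin n) K),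
      max u.num.natDegree u.denom.natDegree = 1 ∧
      Fd ≠ 0 ∧ (∀ d : MvPolynomial (Fin n) K, d ∣ Fn → d ∣ Fd → IsUnit d) ∧
      ratEval u
        ((algebraMap (MvPolynomial (Fin n) K) (FractionRing (MvPolynomial (Fin n) K))
            (aeval (fun i => X i + C (α i)) fn)) /
          (algebraMap (MvPolynomial (Fin n) K) (FractionRing (MvPolynomial (Fin n) K))
            (aeval (fun i => X i + C (α i)) fd))) =
        (algebraMap (MvPolynomial (Fin n) K) (FractionRing (MvPolynomial (Fin n) K)) Fn) /
          (algebraMap (MvPolynomial (Fin n) K) (FractionRing (MvPolynomial (Fin n) K)) Fd) ∧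
      mdeg m Fd < mdeg m Fn ∧
      eval (0 : Fin n → K) Fn = 0 ∧ eval (0 : Fin n → K) Fd ≠ 0 := by
  have hnc' : m.degree fn ≠ 0 ∨ m.degree fd ≠ 0 := by
    simpa only [ne_eq, m.degree_eq_zero_iff_totalDegree_eq_zero, Nat.pos_iff_ne_zero,
      lt_max_iff] using hnc
  obtain ⟨a, b, c, d, hdet, hrel, hQ, hlt⟩ := m.exists_moebius_degree_lt hcopf hnc'
  set P := C a * fn + C b * fd
  set Q := C c * fn + C d * fd
  obtain ⟨α, hα⟩ := exists_eval_ne_zero hQ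
  set e := eval α P / eval α Q
  set φ := algebraMap (MvPolynomial (Fin n) K) (FractionRing (MvPolynomial (Fin n) K))
  have hφ : ∀ {p}, p ≠ 0 → φ (translation α p) ≠ 0 := fun hp => by simpa [φ] using hp
  have hcomb : ∀ a b : K, a • φ (translation α fn) + b • φ (translation α fd) =
      φ (translation α (C a * fn + C b * fd)) := fun a b => by
    simp [φ, Algebra.smul_def, IsScalarTower.algebraMap_apply K (MvPolynomial (Fin n) K)]
  -- `u` is `y ↦ y - e` after `(a y + b)/(c y + d)`, so that `Fn = P - e Q` vanishes at `α`.
  refine ⟨RatFunc.moebius (a - e * c) (b - e * d) c d, α, translation α (P - C e * Q),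
    translation α Q, RatFunc.max_natDegree_num_denom_moebius (by convert hdet using 1; ring),
    by simpa using hQ,
    IsRelPrime.of_map (translation α).symm (by simpa using hrel), ?_, ?_, ?_,
    by rwa [eval_translation, zero_add]⟩
  · rw [← translation_apply, ← translation_apply,
      RatFunc.ratEval_moebius (hφ hfd) (by rw [hcomb]; exact hφ hQ), hcomb, hcomb]
    congr 3
    simp only [P, Q, map_sub, map_mul]
    ring
  · rw [mdeg_eq_toSyn_degree, mdeg_eq_toSyn_degree, m.degree_translation, m.degree_translation,
      m.degree_sub_of_lt]
    · exact hlt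
    · exact lt_of_le_of_lt (m.degree_mul_le.trans (by simp [m.degree_C])) hlt
  · rw [eval_translation, zero_add, map_sub, map_mul, eval_C, div_mul_cancel₀ _ hα, sub_self]
end

section
/- Let f = f_n/f_d ∈ K(x₁,…,xₙ) in lowest terms admit a decomposition f = g(h) with g = (a_u y^u + ⋯ + a₁ y)/(b_v y^v + ⋯ + b₀) ∈ K(y) satisfying u > v and a₀ = 0 (so g(0) = 0), and h = h_n/h_d in lowest terms. Then h_n divides f_n and h_d divides f_d in K[x₁,…,xₙ]. -/
open MvPolynomial


lemma aeval_div_pow_eq {K R L : Type*} [Field K] [CommRing R] [IsDomain R] [Algebra K R]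
    [Field L] [Algebra R L] [Algebra K L] [IsScalarTower K R L]
    (p : Polynomial K) (a b : R) (hb : algebraMap R L b ≠ 0) :
    Polynomial.aeval (algebraMap R L a / algebraMap R L b) p =
      algebraMap R L (∑ i ∈ Finset.range (p.natDegree + 1),
        algebraMap K R (p.coeff i) * a ^ i * b ^ (p.natDegree - i)) /
        algebraMap R L b ^ p.natDegree := by
  rw [eq_div_iff (pow_ne_zero _ hb), Polynomial.aeval_eq_sum_range, Finset.sum_mul, map_sum]
  refine Finset.sum_congr rfl fun i hi => ?_
  rw [Finset.mem_range, Nat.lt_succ_iff] at hi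
  rw [map_mul, map_mul, map_pow, map_pow, ← IsScalarTower.algebraMap_apply,
    Algebra.smul_def, div_pow]
  have hbp : (algebraMap R L b) ^ p.natDegree
      = (algebraMap R L b) ^ i * (algebraMap R L b) ^ (p.natDegree - i) := by
    rw [← pow_add, Nat.add_sub_cancel' hi]
  rw [hbp]
  field_simp

/-- If `f = fn/fd` is in lowest terms and `f = g(h)` with
`g = (a_u y^u + ⋯ + a₁ y)/(b_v y^v + ⋯ + b₀)` satisfying `u > v` and `a₀ = 0`
(so `g(0) = 0`), and `h = hn/hd` is in lowest terms, then `hn ∣ fn` and `hd ∣ fd`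
in `K[x₁,…,xₙ]`. -/
theorem components_divide
    {K : Type*} [Field K] {n : ℕ}
    (fn fd hn hd : MvPolynomial (Fin n) K)
    (hfd : fd ≠ 0) (hhd : hd ≠ 0)
    (hcopf : ∀ d : MvPolynomial (Fin n) K, d ∣ fn → d ∣ fd → IsUnit d)
    (hcoph : ∀ d : MvPolynomial (Fin n) K, d ∣ hn → d ∣ hd → IsUnit d)
    (g : RatFunc K)
    (hdeg : g.denom.natDegree < g.num.natDegree)
    (h0 : g.num.coeff 0 = 0)
    (hcomp :
      (algebraMap (MvPolynomial (Fin n) K) (FractionRing (MvPolynomial (Fin n) K)) fn) /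
        (algebraMap (MvPolynomial (Fin n) K) (FractionRing (MvPolynomial (Fin n) K)) fd) =
      ratEval g
        ((algebraMap (MvPolynomial (Fin n) K) (FractionRing (MvPolynomial (Fin n) K)) hn) /
          (algebraMap (MvPolynomial (Fin n) K) (FractionRing (MvPolynomial (Fin n) K)) hd))) :
    hn ∣ fn ∧ hd ∣ fd := by
  classical
  have hφinj : Function.Injective (algebraMap (MvPolynomial (Fin n) K) (FractionRing (MvPolynomial (Fin n) K))) := IsFractionRing.injective (MvPolynomial (Fin n) K) (FractionRing (MvPolynomial (Fin n) K))
  have hφhd : algebraMap (MvPolynomial (Fin n) K) (FractionRing (MvPolynomial (Fin n) K)) hd ≠ 0 := (map_ne_zero_iff _ hφinj).mpr hhd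
  have hφfd : algebraMap (MvPolynomial (Fin n) K) (FractionRing (MvPolynomial (Fin n) K)) fd ≠ 0 := (map_ne_zero_iff _ hφinj).mpr hfd
  have hN0 : g.num ≠ 0 := by
    intro h
    rw [h] at hdeg
    simp at hdeg
  have hau : g.num.coeff g.num.natDegree ≠ 0 := Polynomial.leadingCoeff_ne_zero.mpr hN0
  have hbv : g.denom.coeff g.denom.natDegree ≠ 0 :=
    Polynomial.leadingCoeff_ne_zero.mpr (g.denom_ne_zero)
  have hb0 : g.denom.coeff 0 ≠ 0 := by
    intro h
    exact Polynomial.not_isUnit_X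
      ((RatFunc.isCoprime_num_denom g).isUnit_of_dvd' (Polynomial.X_dvd_iff.mpr h0)
        (Polynomial.X_dvd_iff.mpr h))
  rw [ratEval, aeval_div_pow_eq _ hn hd hφhd, aeval_div_pow_eq _ hn hd hφhd] at hcomp
  set u := g.num.natDegree with hu
  set v := g.denom.natDegree with hv
  set P : (MvPolynomial (Fin n) K) := ∑ i ∈ Finset.range (u + 1),
      algebraMap K (MvPolynomial (Fin n) K) (g.num.coeff i) * hn ^ i * hd ^ (u - i) with hP
  set Q : (MvPolynomial (Fin n) K) := ∑ j ∈ Finset.range (v + 1),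
      algebraMap K (MvPolynomial (Fin n) K) (g.denom.coeff j) * hn ^ j * hd ^ (v - j) with hQ
  -- divisibility facts
  have hnP : hn ∣ P := by
    rw [hP, Finset.sum_range_succ']
    simp only [h0, map_zero, zero_mul, mul_zero, add_zero, pow_zero, mul_one, Nat.sub_zero]
    exact Finset.dvd_sum fun i _ =>
      ((dvd_pow_self hn i.succ_ne_zero).mul_left _).mul_right _
  have hdPsub : hd ∣ P - algebraMap K (MvPolynomial (Fin n) K) (g.num.coeff u) * hn ^ u := by
    have h1 : P = (∑ i ∈ Finset.range u,
        algebraMap K (MvPolynomial (Fin n) K) (g.num.coeff i) * hn ^ i * hd ^ (u - i))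
        + algebraMap K (MvPolynomial (Fin n) K) (g.num.coeff u) * hn ^ u := by
      rw [hP, Finset.sum_range_succ, Nat.sub_self, pow_zero, mul_one]
    rw [h1, add_sub_cancel_right]
    exact Finset.dvd_sum fun i hi =>
      (dvd_pow_self hd (Nat.sub_ne_zero_of_lt (Finset.mem_range.mp hi))).mul_left _
  have hnQsub : hn ∣ Q - algebraMap K (MvPolynomial (Fin n) K) (g.denom.coeff 0) * hd ^ v := by
    have h1 : Q = (∑ j ∈ Finset.range v,
        algebraMap K (MvPolynomial (Fin n) K) (g.denom.coeff (j + 1)) * hn ^ (j + 1) * hd ^ (v - (j + 1)))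
        + algebraMap K (MvPolynomial (Fin n) K) (g.denom.coeff 0) * hd ^ v := by
      rw [hQ, Finset.sum_range_succ', pow_zero, mul_one, Nat.sub_zero]
    rw [h1, add_sub_cancel_right]
    exact Finset.dvd_sum fun j _ =>
      ((dvd_pow_self hn j.succ_ne_zero).mul_left _).mul_right _
  have hdQsub : hd ∣ Q - algebraMap K (MvPolynomial (Fin n) K) (g.denom.coeff v) * hn ^ v := by
    have h1 : Q = (∑ j ∈ Finset.range v,
        algebraMap K (MvPolynomial (Fin n) K) (g.denom.coeff j) * hn ^ j * hd ^ (v - j))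
        + algebraMap K (MvPolynomial (Fin n) K) (g.denom.coeff v) * hn ^ v := by
      rw [hQ, Finset.sum_range_succ, Nat.sub_self, pow_zero, mul_one]
    rw [h1, add_sub_cancel_right]
    exact Finset.dvd_sum fun j hj =>
      (dvd_pow_self hd (Nat.sub_ne_zero_of_lt (Finset.mem_range.mp hj))).mul_left _
  -- prime facts
  have factA : ∀ p : (MvPolynomial (Fin n) K), Prime p → p ∣ hn → p ∣ Q → False := by
    intro p hp hpn hpQ
    have h1 : p ∣ algebraMap K (MvPolynomial (Fin n) K) (g.denom.coeff 0) * hd ^ v := by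
      have h2 := dvd_sub hpQ (hpn.trans hnQsub)
      simpa using h2
    rcases hp.dvd_or_dvd h1 with h | h
    · exact hp.not_unit (isUnit_of_dvd_unit h
        ((isUnit_iff_ne_zero.mpr hb0).map (algebraMap K (MvPolynomial (Fin n) K))))
    · exact hp.not_unit (hcoph p hpn (hp.dvd_of_dvd_pow h))
  have factB : ∀ p : (MvPolynomial (Fin n) K), Prime p → p ∣ hd → p ∣ P → False := by
    intro p hp hpd hpP
    have h1 : p ∣ algebraMap K (MvPolynomial (Fin n) K) (g.num.coeff u) * hn ^ u := by
      have h2 := dvd_sub hpP (hpd.trans hdPsub)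
      simpa using h2
    rcases hp.dvd_or_dvd h1 with h | h
    · exact hp.not_unit (isUnit_of_dvd_unit h
        ((isUnit_iff_ne_zero.mpr hau).map (algebraMap K (MvPolynomial (Fin n) K))))
    · exact hp.not_unit (hcoph p (hp.dvd_of_dvd_pow h) hpd)
  have factB' : ∀ p : (MvPolynomial (Fin n) K), Prime p → p ∣ hd → p ∣ Q → False := by
    intro p hp hpd hpQ
    have h1 : p ∣ algebraMap K (MvPolynomial (Fin n) K) (g.denom.coeff v) * hn ^ v := by
      have h2 := dvd_sub hpQ (hpd.trans hdQsub)
      simpa using h2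
    rcases hp.dvd_or_dvd h1 with h | h
    · exact hp.not_unit (isUnit_of_dvd_unit h
        ((isUnit_iff_ne_zero.mpr hbv).map (algebraMap K (MvPolynomial (Fin n) K))))
    · exact hp.not_unit (hcoph p (hp.dvd_of_dvd_pow h) hpd)
  by_cases hQ0 : Q = 0
  · -- then hn and hd are units
    have hn0 : hn ≠ 0 := by
      intro h
      have h1 : Q = algebraMap K (MvPolynomial (Fin n) K) (g.denom.coeff 0) * hd ^ v := by
        rw [hQ, Finset.sum_range_succ', h]
        simp
      exact (mul_ne_zero ((isUnit_iff_ne_zero.mpr hb0).map (algebraMap K (MvPolynomial (Fin n) K))).ne_zero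
        (pow_ne_zero _ hhd)) (h1 ▸ hQ0)
    have hun : IsUnit hn := by
      by_contra hcon
      obtain ⟨p, hip, hpd⟩ := WfDvdMonoid.exists_irreducible_factor hcon hn0
      exact factA p (UniqueFactorizationMonoid.irreducible_iff_prime.mp hip) hpd
        (hQ0 ▸ dvd_zero p)
    have hud : IsUnit hd := by
      by_contra hcon
      obtain ⟨p, hip, hpd⟩ := WfDvdMonoid.exists_irreducible_factor hcon hhd
      exact factB' p (UniqueFactorizationMonoid.irreducible_iff_prime.mp hip) hpd
        (hQ0 ▸ dvd_zero p)
    exact ⟨hun.dvd, hud.dvd⟩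
  · have hφQ : algebraMap (MvPolynomial (Fin n) K) (FractionRing (MvPolynomial (Fin n) K)) Q ≠ 0 := (map_ne_zero_iff _ hφinj).mpr hQ0
    have hE : fn * Q * hd ^ (u - v) = fd * P := by
      apply hφinj
      rw [map_mul, map_mul, map_mul, map_pow]
      apply mul_right_cancel₀ (pow_ne_zero v hφhd)
      have huv : algebraMap (MvPolynomial (Fin n) K) (FractionRing (MvPolynomial (Fin n) K)) hd ^ (u - v) * algebraMap (MvPolynomial (Fin n) K) (FractionRing (MvPolynomial (Fin n) K)) hd ^ v
          = algebraMap (MvPolynomial (Fin n) K) (FractionRing (MvPolynomial (Fin n) K)) hd ^ u := by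
        rw [← pow_add, Nat.sub_add_cancel hdeg.le]
      field_simp at hcomp
      rw [mul_assoc, mul_assoc, huv]
      linear_combination hcomp
    constructor
    · by_cases hn0 : hn = 0
      · have hP0 : P = 0 := zero_dvd_iff.mp (hn0 ▸ hnP)
        have : fn * Q * hd ^ (u - v) = 0 := by rw [hE, hP0, mul_zero]
        rcases mul_eq_zero.mp this with h | h
        · rcases mul_eq_zero.mp h with h' | h'
          · rw [h']; exact dvd_zero hn
          · exact absurd h' hQ0
        · exact absurd h (pow_ne_zero _ hhd)
      · refine UniqueFactorizationMonoid.dvd_of_dvd_mul_left_of_no_prime_factors (b := fn) (c := Q * hd ^ (u - v)) hn0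
          (fun d hdn hdc hpd => ?_) ?_
        · rcases hpd.dvd_or_dvd hdc with h | h
          · exact factA d hpd hdn h
          · exact hpd.not_unit (hcoph d hdn (hpd.dvd_of_dvd_pow h))
        · rw [← mul_assoc, hE]
          exact hnP.mul_left fd
    · refine UniqueFactorizationMonoid.dvd_of_dvd_mul_left_of_no_prime_factors (b := fd) (c := P) hhd
        (fun d hdd hdP hpd => factB d hpd hdd hdP) ?_
      rw [← hE]
      exact (dvd_pow_self hd (Nat.sub_ne_zero_of_lt hdeg)).mul_left _
end

section
/- Suppose K ⊆ K' is a field extension. If h ∈ K(x₁,…,xₙ) is a rational function with coefficients in K such that K(f₁,…,f_m) = K(h) for given f₁,…,f_m ∈ K(x₁,…,xₙ), then also K'(f₁,…,f_m) = K'(h) inside K'(x₁,…,xₙ). -/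
open MvPolynomial IntermediateField

/-- A Lüroth generator is stable under ground field extension: if
`h = hn/hd ∈ K(x₁,…,xₙ)` satisfies `K(f₁,…,f_m) = K(h)` for rational functions
`fᵢ = fnᵢ/fdᵢ` with coefficients in `K`, then for any field extension `K ⊆ K'` we
also have `K'(f₁,…,f_m) = K'(h)` inside `K'(x₁,…,xₙ)`. -/
theorem luroth_generator_stable_under_base_change
    {K K' : Type*} [Field K] [Field K'] [Algebra K K'] {n m : ℕ}
    (fn fd : Fin m → MvPolynomial (Fin n) K)
    (hn hd : MvPolynomial (Fin n) K)
    (hyp : IntermediateField.adjoin K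
        (Set.range fun i =>
          (algebraMap (MvPolynomial (Fin n) K) (FractionRing (MvPolynomial (Fin n) K)) (fn i)) /
            (algebraMap (MvPolynomial (Fin n) K) (FractionRing (MvPolynomial (Fin n) K)) (fd i)))
      = IntermediateField.adjoin K
        {(algebraMap (MvPolynomial (Fin n) K) (FractionRing (MvPolynomial (Fin n) K)) hn) /
          (algebraMap (MvPolynomial (Fin n) K) (FractionRing (MvPolynomial (Fin n) K)) hd)}) :
    IntermediateField.adjoin K'
        (Set.range fun i =>
          (algebraMap (MvPolynomial (Fin n) K') (FractionRing (MvPolynomial (Fin n) K'))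
              (map (algebraMap K K') (fn i))) /
            (algebraMap (MvPolynomial (Fin n) K') (FractionRing (MvPolynomial (Fin n) K'))
              (map (algebraMap K K') (fd i))))
      = IntermediateField.adjoin K'
        {(algebraMap (MvPolynomial (Fin n) K') (FractionRing (MvPolynomial (Fin n) K'))
            (map (algebraMap K K') hn)) /
          (algebraMap (MvPolynomial (Fin n) K') (FractionRing (MvPolynomial (Fin n) K'))
            (map (algebraMap K K') hd))} := by
  letI A := MvPolynomial (Fin n) K
  letI A' := MvPolynomial (Fin n) K'
  letI Fr := FractionRing A
  letI Fr' := FractionRing A'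
  have hmapinj : Function.Injective (map (algebraMap K K') : A →+* A') :=
    MvPolynomial.map_injective _ (algebraMap K K').injective
  have hg : Function.Injective
      ((algebraMap A' Fr').comp (map (algebraMap K K') : A →+* A')) :=
    (IsFractionRing.injective A' Fr').comp hmapinj
  let φ : Fr →+* Fr' := IsFractionRing.lift hg
  have hφa : ∀ p : A, φ (algebraMap A Fr p)
      = algebraMap A' Fr' (map (algebraMap K K') p) := fun p =>
    IsFractionRing.lift_algebraMap hg p
  have hφc : ∀ c : K, φ (algebraMap K Fr c) = algebraMap K' Fr' (algebraMap K K' c) := by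
    intro c
    rw [IsScalarTower.algebraMap_apply K A Fr, hφa]
    rw [show ((algebraMap K A) c : A) = C c from rfl, map_C,
      show (C ((algebraMap K K') c) : A') = algebraMap K' A' ((algebraMap K K') c) from rfl,
      ← IsScalarTower.algebraMap_apply K' A' Fr']
  have key : ∀ S T : Set Fr, adjoin K S ≤ adjoin K T →
      adjoin K' (φ '' S) ≤ adjoin K' (φ '' T) := by
    intro S T hST
    set E := adjoin K' (φ '' T) with hE
    set P : IntermediateField K Fr :=
      Subfield.toIntermediateField (E.toSubfield.comap φ) (fun c => by
        simp only [Subfield.mem_comap, hφc c]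
        exact E.algebraMap_mem (algebraMap K K' c)) with hP
    have hTP : adjoin K T ≤ P := by
      rw [adjoin_le_iff]
      intro t ht
      exact subset_adjoin K' _ (Set.mem_image_of_mem φ ht)
    rw [adjoin_le_iff]
    rintro _ ⟨s, hs, rfl⟩
    exact hTP (hST (subset_adjoin K S hs))
  have hfun : (⇑φ ∘ fun i => algebraMap A Fr (fn i) / algebraMap A Fr (fd i))
      = fun i => (algebraMap A' Fr' (map (algebraMap K K') (fn i))) /
          (algebraMap A' Fr' (map (algebraMap K K') (fd i))) := by
    funext i
    simp only [Function.comp_apply, map_div₀, hφa]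
  have himg1 : φ '' (Set.range fun i =>
        (algebraMap A Fr (fn i)) / (algebraMap A Fr (fd i)))
      = Set.range fun i =>
        (algebraMap A' Fr' (map (algebraMap K K') (fn i))) /
          (algebraMap A' Fr' (map (algebraMap K K') (fd i))) := by
    rw [← Set.range_comp, hfun]
  have himg2 : φ '' {(algebraMap A Fr hn) / (algebraMap A Fr hd)}
      = {(algebraMap A' Fr' (map (algebraMap K K') hn)) /
          (algebraMap A' Fr' (map (algebraMap K K') hd))} := by
    rw [Set.image_singleton, map_div₀, hφa, hφa]
  have main := le_antisymm (key _ _ hyp.le) (key _ _ hyp.ge)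
  rw [himg1, himg2] at main
  exact main
end
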